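/- arXiv:2211.05415 — 6 statements merged into one kernel-verified Lean document; each statement's English description precedes it below -/
import Mathlib

section
/- If X ~ Binomial(n, p) and \hat{p} = X/n, then the central moments \mu_m = E[(\hat{p} - p)^m] satisfy the recursion \mu_0 = 1, \mu_1 = 0, and \mu_{m+1} = (p(1-p)/n) * (m * \mu_{m-1} + d/dp \mu_m), where \mu_m is viewed as a polynomial function of p. -/
/-!
Write `μ_m(p) = ∑ₓ (x/n - p)^m w_x(p)` with the binomial weights
`w_x(p) = C(n,x) p^x (1-p)^(n-x)`. These satisfy the score identity
`p(1-p) w_x' = (x - np) w_x = n (x/n - p) w_x`. Differentiating `μ_m` term by term and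
multiplying by `p(1-p)`, the weight derivatives therefore raise the power of `x/n - p` by one,
giving `n μ_{m+1}`, while differentiating `(x/n - p)^m` gives `-m p(1-p) μ_{m-1}`.
The case `m = 0` of this recursion is `μ_1 = 0`, since `μ_0 = ∑ₓ w_x = 1` is constant.
-/

/-- `m`-th central moment of `X/n` where `X ~ Binomial(n,p)`. -/
noncomputable def binCentralMoment (n m : ℕ) (p : ℝ) : ℝ :=
  ∑ x ∈ Finset.range (n + 1),
    ((x : ℝ) / (n : ℝ) - p) ^ m * (n.choose x : ℝ) * p ^ x * (1 - p) ^ (n - x)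

open Finset

noncomputable def binomWeight (n x : ℕ) (p : ℝ) : ℝ :=
  n.choose x * p ^ x * (1 - p) ^ (n - x)

lemma sum_binomWeight (n : ℕ) (p : ℝ) : ∑ x ∈ range (n + 1), binomWeight n x p = 1 := by
  have h := (add_pow p (1 - p) n).symm
  rw [add_sub_cancel, one_pow] at h
  rw [← h]
  exact sum_congr rfl fun x _ => by unfold binomWeight; ring

lemma differentiable_binomWeight (n x : ℕ) : Differentiable ℝ (binomWeight n x) := by
  unfold binomWeight
  fun_prop

lemma natCast_mul_pow_sub_one_mul {R : Type*} [CommSemiring R] (k : ℕ) (a : R) :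
    (k : R) * a ^ (k - 1) * a = k * a ^ k := by
  rcases k with _ | k
  · simp
  · rw [mul_assoc, Nat.add_sub_cancel, ← pow_succ]

lemma mul_one_sub_mul_deriv_binomWeight (n x : ℕ) (p : ℝ) :
    p * (1 - p) * deriv (binomWeight n x) p = (x - n * p) * binomWeight n x p := by
  rcases lt_or_ge n x with hnx | hxn
  · have hzero : binomWeight n x = 0 := by
      funext q
      simp [binomWeight, Nat.choose_eq_zero_of_lt hnx]
    simp [hzero]
  have hderiv : HasDerivAt (binomWeight n x)
      (n.choose x * (x * p ^ (x - 1) * (1 - p) ^ (n - x) -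
        p ^ x * ((n - x : ℕ) * (1 - p) ^ (n - x - 1)))) p := by
    have hpow := ((hasDerivAt_id' p).const_sub 1).fun_pow (n - x)
    exact (((hasDerivAt_pow x p).const_mul (n.choose x : ℝ)).fun_mul hpow).congr_deriv
      (by ring)
  rw [hderiv.deriv, binomWeight]
  linear_combination (n.choose x : ℝ) * (1 - p) * (1 - p) ^ (n - x) *
      natCast_mul_pow_sub_one_mul x p -
    (n.choose x : ℝ) * p * p ^ x * natCast_mul_pow_sub_one_mul (n - x) (1 - p) -
    (n.choose x : ℝ) * p * p ^ x * (1 - p) ^ (n - x) * Nat.cast_sub (R := ℝ) hxn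

lemma binCentralMoment_eq_sum_binomWeight (n m : ℕ) (p : ℝ) :
    binCentralMoment n m p = ∑ x ∈ range (n + 1), ((x : ℝ) / n - p) ^ m * binomWeight n x p := by
  simp only [binCentralMoment, binomWeight, mul_assoc]

lemma binCentralMoment_zero (n : ℕ) (p : ℝ) : binCentralMoment n 0 p = 1 := by
  simp only [binCentralMoment_eq_sum_binomWeight, pow_zero, one_mul, sum_binomWeight]

lemma mul_one_sub_mul_deriv_binCentralMoment {n : ℕ} (hn : n ≠ 0) (m : ℕ) (p : ℝ) :
    p * (1 - p) * deriv (fun q => binCentralMoment n m q) p =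
      n * binCentralMoment n (m + 1) p - m * (p * (1 - p)) * binCentralMoment n (m - 1) p := by
  have hpow (x : ℕ) : HasDerivAt (fun q : ℝ => ((x : ℝ) / n - q) ^ m)
      (m * ((x : ℝ) / n - p) ^ (m - 1) * -1) p :=
    ((hasDerivAt_id' p).const_sub _).fun_pow m
  simp only [binCentralMoment_eq_sum_binomWeight]
  rw [deriv_fun_sum fun x _ => (hpow x).differentiableAt.fun_mul
    (differentiable_binomWeight n x p), mul_sum, mul_sum, mul_sum, ← sum_sub_distrib]
  refine sum_congr rfl fun x _ => ?_
  rw [deriv_fun_mul (hpow x).differentiableAt (differentiable_binomWeight n x p),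
    (hpow x).deriv]
  have hscaled : (n : ℝ) * ((x : ℝ) / n - p) = x - n * p := by
    field_simp
  linear_combination ((x : ℝ) / n - p) ^ m * mul_one_sub_mul_deriv_binomWeight n x p -
    ((x : ℝ) / n - p) ^ m * binomWeight n x p * hscaled

lemma binCentralMoment_succ {n : ℕ} (hn : n ≠ 0) (m : ℕ) (p : ℝ) :
    binCentralMoment n (m + 1) p =
      p * (1 - p) / n * (m * binCentralMoment n (m - 1) p +
        deriv (fun q => binCentralMoment n m q) p) := by
  have hn' : (n : ℝ) ≠ 0 := Nat.cast_ne_zero.mpr hn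
  field_simp
  linear_combination -mul_one_sub_mul_deriv_binCentralMoment hn m p

theorem binCentralMoment_recursion_general (n : ℕ) (hn : 0 < n) (p : ℝ) :
    binCentralMoment n 0 p = 1 ∧
    binCentralMoment n 1 p = 0 ∧
    ∀ m : ℕ, 1 ≤ m →
      binCentralMoment n (m + 1) p =
        p * (1 - p) / (n : ℝ) *
          ((m : ℝ) * binCentralMoment n (m - 1) p +
            deriv (fun q : ℝ => binCentralMoment n m q) p) := by
  have hderiv_zero : deriv (fun q => binCentralMoment n 0 q) p = 0 := by
    simp only [binCentralMoment_zero, deriv_const]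
  refine ⟨binCentralMoment_zero n p, ?_, fun m _ => binCentralMoment_succ hn.ne' m p⟩
  simpa [hderiv_zero] using binCentralMoment_succ hn.ne' 0 p

/-- Renovsky formula: recursion for the central moments of the binomial
empirical frequency `p̂ = X/n`. -/
theorem binCentralMoment_recursion (n : ℕ) (hn : 0 < n) (p : ℝ)
    (hp : 0 < p) (hp1 : p < 1) :
    binCentralMoment n 0 p = 1 ∧
    binCentralMoment n 1 p = 0 ∧
    ∀ m : ℕ, 1 ≤ m →
      binCentralMoment n (m + 1) p =
        p * (1 - p) / (n : ℝ) *
          ((m : ℝ) * binCentralMoment n (m - 1) p +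
            deriv (fun q : ℝ => binCentralMoment n m q) p) :=
  binCentralMoment_recursion_general n hn p
end

section
/- For the multinomial distribution with parameters n and (p_1, p_2), the joint central moments of \hat{p}_i = f_i/n satisfy the partial-derivative identity ∂/∂p_1 \mu^M_{m,k} = -nm \mu^M_{m-1,k} + ((1-p_2)/(p_1 q)) \mu^M_{m+1,k} + (1/q) \mu^M_{m,k+1}, where q = 1 - p_1 - p_2 and \mu^M_{m,k} = E[(f_1 - np_1)^m (f_2 - np_2)^k]. -/
/-!
Write `μᴹ_{m,k}` as a sum of `(x₁ - np₁)^m (x₂ - np₂)^k` against the multinomial weights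
`w = C p₁^x₁ p₂^x₂ q^(n-x₁-x₂)`. The score of `w` in `p₁` is
`x₁/p₁ - (n-x₁-x₂)/q = ((x₁ - np₁)(1 - p₂) + p₁(x₂ - np₂)) / (p₁ q)`, so differentiating a summand
produces exactly one extra power of a centred count, and summing gives the identity.
-/

/-- Unnormalized `(m,k)`-joint central moment of a multinomial `(f₁,f₂)`
with `n` trials and cell probabilities `(p₁,p₂)`:
`μᴹ_{m,k} = E[(f₁-np₁)^m (f₂-np₂)^k]`. -/
noncomputable def multCentralMomentUnnorm (n m k : ℕ) (p₁ p₂ : ℝ) : ℝ :=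
  ∑ x₁ ∈ Finset.range (n + 1), ∑ x₂ ∈ Finset.range (n - x₁ + 1),
    ((x₁ : ℝ) - (n : ℝ) * p₁) ^ m * ((x₂ : ℝ) - (n : ℝ) * p₂) ^ k *
      ((n.factorial : ℝ) /
        ((x₁.factorial : ℝ) * (x₂.factorial : ℝ) * ((n - x₁ - x₂).factorial : ℝ))) *
      p₁ ^ x₁ * p₂ ^ x₂ * (1 - p₁ - p₂) ^ (n - x₁ - x₂)

noncomputable def multinomialWeight (n x₁ x₂ : ℕ) (p₁ p₂ : ℝ) : ℝ :=
  (n.factorial : ℝ) / ((x₁.factorial : ℝ) * (x₂.factorial : ℝ) * ((n - x₁ - x₂).factorial : ℝ)) *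
    p₁ ^ x₁ * p₂ ^ x₂ * (1 - p₁ - p₂) ^ (n - x₁ - x₂)

lemma multCentralMomentUnnorm_eq_sum (n m k : ℕ) (p₁ p₂ : ℝ) :
    multCentralMomentUnnorm n m k p₁ p₂ =
      ∑ x₁ ∈ Finset.range (n + 1), ∑ x₂ ∈ Finset.range (n - x₁ + 1),
        ((x₁ : ℝ) - n * p₁) ^ m * ((x₂ : ℝ) - n * p₂) ^ k * multinomialWeight n x₁ x₂ p₁ p₂ := by
  simp only [multCentralMomentUnnorm, multinomialWeight, mul_assoc]

lemma hasDerivAt_pow_mul_sub_pow {p : ℝ} (c : ℝ) (a b : ℕ) (hp : p ≠ 0) (hcp : c - p ≠ 0) :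
    HasDerivAt (fun t : ℝ => t ^ a * (c - t) ^ b)
      ((a / p - b / (c - p)) * (p ^ a * (c - p) ^ b)) p := by
  refine ((hasDerivAt_pow a p).mul ((hasDerivAt_id p).const_sub c |>.fun_pow b)).congr_deriv ?_
  rcases a with _ | a <;> rcases b with _ | b
  · simp
  all_goals simp only [Nat.add_sub_cancel, pow_succ, id]; field_simp; push_cast; ring

lemma hasDerivAt_multinomialWeight {n x₁ x₂ : ℕ} {p₁ : ℝ} (p₂ : ℝ) (hx : x₁ + x₂ ≤ n)
    (hp₁ : p₁ ≠ 0) (hq : 1 - p₁ - p₂ ≠ 0) :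
    HasDerivAt (fun p : ℝ => multinomialWeight n x₁ x₂ p p₂)
      (((x₁ - n * p₁) * (1 - p₂) + p₁ * (x₂ - n * p₂)) / (p₁ * (1 - p₁ - p₂)) *
        multinomialWeight n x₁ x₂ p₁ p₂) p₁ := by
  set C : ℝ := (n.factorial : ℝ) /
    ((x₁.factorial : ℝ) * (x₂.factorial : ℝ) * ((n - x₁ - x₂).factorial : ℝ))
  have hweight : (fun p : ℝ => multinomialWeight n x₁ x₂ p p₂) =
      fun p => C * (p ^ x₁ * (1 - p₂ - p) ^ (n - x₁ - x₂)) * p₂ ^ x₂ := by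
    funext p
    simp only [multinomialWeight, C, sub_right_comm _ p p₂]
    ring
  have hcq : 1 - p₂ - p₁ ≠ 0 := by rwa [sub_right_comm]
  have hcast : ((n - x₁ - x₂ : ℕ) : ℝ) = n - x₁ - x₂ := by
    rw [Nat.cast_sub (by omega), Nat.cast_sub (by omega)]
  rw [hweight]
  refine (((hasDerivAt_pow_mul_sub_pow (1 - p₂) x₁ (n - x₁ - x₂) hp₁ hcq).const_mul C).mul_const
    (p₂ ^ x₂)).congr_deriv ?_
  simp only [multinomialWeight, C, hcast, sub_right_comm _ p₁ p₂]
  field_simp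
  ring

lemma hasDerivAt_centralTerm {n x₁ x₂ : ℕ} (m k : ℕ) {p₁ : ℝ} (p₂ : ℝ) (hx : x₁ + x₂ ≤ n)
    (hp₁ : p₁ ≠ 0) (hq : 1 - p₁ - p₂ ≠ 0) :
    HasDerivAt (fun p : ℝ =>
        ((x₁ : ℝ) - n * p) ^ m * ((x₂ : ℝ) - n * p₂) ^ k * multinomialWeight n x₁ x₂ p p₂)
      (-(n : ℝ) * m *
          (((x₁ : ℝ) - n * p₁) ^ (m - 1) * ((x₂ : ℝ) - n * p₂) ^ k *
            multinomialWeight n x₁ x₂ p₁ p₂)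
        + (1 - p₂) / (p₁ * (1 - p₁ - p₂)) *
          (((x₁ : ℝ) - n * p₁) ^ (m + 1) * ((x₂ : ℝ) - n * p₂) ^ k *
            multinomialWeight n x₁ x₂ p₁ p₂)
        + 1 / (1 - p₁ - p₂) *
          (((x₁ : ℝ) - n * p₁) ^ m * ((x₂ : ℝ) - n * p₂) ^ (k + 1) *
            multinomialWeight n x₁ x₂ p₁ p₂)) p₁ := by
  have hcentred : HasDerivAt (fun p : ℝ => ((x₁ : ℝ) - n * p) ^ m)
      (m * ((x₁ : ℝ) - n * p₁) ^ (m - 1) * (0 - n * 1)) p₁ :=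
    ((hasDerivAt_const p₁ (x₁ : ℝ)).sub ((hasDerivAt_id p₁).const_mul (n : ℝ))).pow m
  refine ((hcentred.mul_const (((x₂ : ℝ) - n * p₂) ^ k)).mul
    (hasDerivAt_multinomialWeight p₂ hx hp₁ hq)).congr_deriv ?_
  field_simp
  ring

theorem multCentralMomentUnnorm_deriv_general (n : ℕ) (p₁ p₂ : ℝ)
    (hp₁ : 0 < p₁) (hsum : p₁ + p₂ < 1) (m k : ℕ) :
    deriv (fun q : ℝ => multCentralMomentUnnorm n m k q p₂) p₁ =
      -(n : ℝ) * (m : ℝ) * multCentralMomentUnnorm n (m - 1) k p₁ p₂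
      + ((1 - p₂) / (p₁ * (1 - p₁ - p₂))) * multCentralMomentUnnorm n (m + 1) k p₁ p₂
      + (1 / (1 - p₁ - p₂)) * multCentralMomentUnnorm n m (k + 1) p₁ p₂ := by
  have hq : 1 - p₁ - p₂ ≠ 0 := by linarith
  have hsum_deriv := HasDerivAt.fun_sum fun x₁ (hx₁ : x₁ ∈ Finset.range (n + 1)) =>
    HasDerivAt.fun_sum fun x₂ (hx₂ : x₂ ∈ Finset.range (n - x₁ + 1)) =>
      hasDerivAt_centralTerm m k p₂
        (show x₁ + x₂ ≤ n by simp only [Finset.mem_range] at hx₁ hx₂; omega)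
        hp₁.ne' hq
  simp only [multCentralMomentUnnorm_eq_sum]
  rw [hsum_deriv.deriv]
  simp only [Finset.mul_sum, ← Finset.sum_add_distrib]

/-- Partial-derivative identity for the unnormalized multinomial central moments. -/
theorem multCentralMomentUnnorm_deriv (n : ℕ) (p₁ p₂ : ℝ)
    (hp₁ : 0 < p₁) (hp₂ : 0 < p₂) (hsum : p₁ + p₂ < 1) (m k : ℕ) :
    deriv (fun q : ℝ => multCentralMomentUnnorm n m k q p₂) p₁ =
      -(n : ℝ) * (m : ℝ) * multCentralMomentUnnorm n (m - 1) k p₁ p₂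
      + ((1 - p₂) / (p₁ * (1 - p₁ - p₂))) * multCentralMomentUnnorm n (m + 1) k p₁ p₂
      + (1 / (1 - p₁ - p₂)) * multCentralMomentUnnorm n m (k + 1) p₁ p₂ :=
  multCentralMomentUnnorm_deriv_general n p₁ p₂ hp₁ hsum m k
end

section
/- For (f_1, f_2) multinomial with parameters n and (p_1, p_2), and \hat{p}_i = f_i/n: \mu_{2,1} = -p_1 p_2 (1-2p_1)/n^2 and \mu_{2,2} = (p_1 p_2 (1-p_1)(1-p_2) + 2 p_1^2 p_2^2)/n^2 + (p_1 p_2 - 2 p_1 p_2 (1-p_1)(1-p_2) - 4 p_1^2 p_2^2)/n^3. -/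
open Finset

set_option maxHeartbeats 2000000


lemma fact_ne (k : ℕ) : ((k.factorial : ℝ)) ≠ 0 := by
  exact_mod_cast k.factorial_ne_zero

lemma castDesc (n k : ℕ) :
    (n.descFactorial k : ℝ) = ∏ i ∈ Finset.range k, ((n : ℝ) - i) := by
  rcases le_or_gt k n with h | h
  · rw [Nat.descFactorial_eq_prod_range, Nat.cast_prod]
    apply Finset.prod_congr rfl
    intro i hi; rw [Finset.mem_range] at hi
    rw [Nat.cast_sub (by omega)]
  · rw [Nat.descFactorial_eq_zero_iff_lt.2 h, Nat.cast_zero]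
    symm
    apply Finset.prod_eq_zero (Finset.mem_range.2 h)
    simp

lemma trinom_sum (m : ℕ) (a b c : ℝ) :
    ∑ x₁ ∈ Finset.range (m + 1), ∑ x₂ ∈ Finset.range (m - x₁ + 1),
      ((m.factorial : ℝ) /
        ((x₁.factorial : ℝ) * (x₂.factorial : ℝ) * ((m - x₁ - x₂).factorial : ℝ))) *
        a ^ x₁ * b ^ x₂ * c ^ (m - x₁ - x₂) = (a + b + c) ^ m := by
  have h : ∀ x₁ ∈ Finset.range (m + 1),
      (∑ x₂ ∈ Finset.range (m - x₁ + 1),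
        ((m.factorial : ℝ) /
          ((x₁.factorial : ℝ) * (x₂.factorial : ℝ) * ((m - x₁ - x₂).factorial : ℝ))) *
          a ^ x₁ * b ^ x₂ * c ^ (m - x₁ - x₂))
        = a ^ x₁ * (b + c) ^ (m - x₁) * (m.choose x₁ : ℝ) := by
    intro x₁ hx₁
    rw [Finset.mem_range] at hx₁
    have hx₁' : x₁ ≤ m := by omega
    rw [add_pow, Finset.mul_sum, Finset.sum_mul]
    apply Finset.sum_congr rfl
    intro x₂ hx₂
    rw [Finset.mem_range] at hx₂
    have hx₂' : x₂ ≤ m - x₁ := by omega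
    rw [Nat.cast_choose ℝ hx₁', Nat.cast_choose ℝ hx₂']
    have h1 := fact_ne x₁
    have h2 := fact_ne x₂
    have h3 := fact_ne (m - x₁ - x₂)
    have h4 := fact_ne (m - x₁)
    field_simp
  rw [Finset.sum_congr rfl h, ← add_pow]
  ring_nf

lemma desc_sum (n a b : ℕ) (p₁ p₂ q : ℝ) :
    ∑ x₁ ∈ Finset.range (n + 1), ∑ x₂ ∈ Finset.range (n - x₁ + 1),
      (x₁.descFactorial a : ℝ) * (x₂.descFactorial b : ℝ) *
      ((n.factorial : ℝ) /
        ((x₁.factorial : ℝ) * (x₂.factorial : ℝ) * ((n - x₁ - x₂).factorial : ℝ))) *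
        p₁ ^ x₁ * p₂ ^ x₂ * q ^ (n - x₁ - x₂)
      = ∑ x₁ ∈ Finset.Ico a (n - b + 1), ∑ x₂ ∈ Finset.Ico b (n - x₁ + 1),
      (x₁.descFactorial a : ℝ) * (x₂.descFactorial b : ℝ) *
      ((n.factorial : ℝ) /
        ((x₁.factorial : ℝ) * (x₂.factorial : ℝ) * ((n - x₁ - x₂).factorial : ℝ))) *
        p₁ ^ x₁ * p₂ ^ x₂ * q ^ (n - x₁ - x₂) := by
  have hsub : Finset.Ico a (n - b + 1) ⊆ Finset.range (n + 1) := by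
    intro x hx; rw [Finset.mem_Ico] at hx; rw [Finset.mem_range]; omega
  rw [← Finset.sum_subset hsub ?_]
  · apply Finset.sum_congr rfl
    intro x₁ hx₁
    rw [Finset.mem_Ico] at hx₁
    have hsub2 : Finset.Ico b (n - x₁ + 1) ⊆ Finset.range (n - x₁ + 1) := by
      intro x hx; rw [Finset.mem_Ico] at hx; rw [Finset.mem_range]; omega
    rw [← Finset.sum_subset hsub2 ?_]
    intro x₂ hx₂ hx₂'
    rw [Finset.mem_range] at hx₂
    rw [Finset.mem_Ico] at hx₂'
    have : x₂ < b := by omega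
    rw [Nat.descFactorial_eq_zero_iff_lt.2 this]; simp
  · intro x₁ hx₁ hx₁'
    rw [Finset.mem_range] at hx₁
    rw [Finset.mem_Ico] at hx₁'
    apply Finset.sum_eq_zero
    intro x₂ hx₂
    rw [Finset.mem_range] at hx₂
    rcases lt_or_ge x₁ a with h | h
    · rw [Nat.descFactorial_eq_zero_iff_lt.2 h]; simp
    · have : x₂ < b := by omega
      rw [Nat.descFactorial_eq_zero_iff_lt.2 this]; simp

lemma desc_sum_eval (n a b : ℕ) (p₁ p₂ q : ℝ) (hle : a + b ≤ n) :
    ∑ x₁ ∈ Finset.range (n + 1), ∑ x₂ ∈ Finset.range (n - x₁ + 1),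
      (x₁.descFactorial a : ℝ) * (x₂.descFactorial b : ℝ) *
      ((n.factorial : ℝ) /
        ((x₁.factorial : ℝ) * (x₂.factorial : ℝ) * ((n - x₁ - x₂).factorial : ℝ))) *
        p₁ ^ x₁ * p₂ ^ x₂ * q ^ (n - x₁ - x₂)
      = (n.descFactorial (a + b) : ℝ) * p₁ ^ a * p₂ ^ b *
          (p₁ + p₂ + q) ^ (n - a - b) := by
  set m := n - a - b with hm
  set D : ℝ := (n.descFactorial (a + b) : ℝ) with hD
  rw [desc_sum n a b p₁ p₂ q]
  have hidx : n - b + 1 - a = m + 1 := by omega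
  rw [Finset.sum_Ico_eq_sum_range, hidx]
  have key : ∀ i ∈ Finset.range (m + 1),
      (∑ x₂ ∈ Finset.Ico b (n - (a + i) + 1),
        (((a + i).descFactorial a : ℝ) * (x₂.descFactorial b : ℝ) *
        ((n.factorial : ℝ) /
          (((a + i).factorial : ℝ) * (x₂.factorial : ℝ) *
            ((n - (a + i) - x₂).factorial : ℝ))) *
          p₁ ^ (a + i) * p₂ ^ x₂ * q ^ (n - (a + i) - x₂)))
      = ∑ j ∈ Finset.range (m - i + 1),
          D * p₁ ^ a * p₂ ^ b *
          (((m.factorial : ℝ) /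
            ((i.factorial : ℝ) * (j.factorial : ℝ) * ((m - i - j).factorial : ℝ))) *
            p₁ ^ i * p₂ ^ j * q ^ (m - i - j)) := by
    intro i hi
    rw [Finset.mem_range] at hi
    have hidx2 : n - (a + i) + 1 - b = m - i + 1 := by omega
    rw [Finset.sum_Ico_eq_sum_range, hidx2]
    apply Finset.sum_congr rfl
    intro j hj
    rw [Finset.mem_range] at hj
    have he : n - (a + i) - (b + j) = m - i - j := by omega
    rw [he]
    have h1 : (i.factorial : ℝ) * ((a + i).descFactorial a : ℝ)
        = ((a + i).factorial : ℝ) := by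
      have := Nat.factorial_mul_descFactorial (show a ≤ a + i by omega)
      have h' : a + i - a = i := by omega
      rw [h'] at this
      exact_mod_cast this
    have h2 : (j.factorial : ℝ) * ((b + j).descFactorial b : ℝ)
        = ((b + j).factorial : ℝ) := by
      have := Nat.factorial_mul_descFactorial (show b ≤ b + j by omega)
      have h' : b + j - b = j := by omega
      rw [h'] at this
      exact_mod_cast this
    have h3 : (m.factorial : ℝ) * D = (n.factorial : ℝ) := by
      have := Nat.factorial_mul_descFactorial (show a + b ≤ n from hle)
      have h' : n - (a + b) = m := by omega
      rw [h'] at this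
      rw [hD]
      exact_mod_cast this
    have e1 : ((a + i).descFactorial a : ℝ) = ((a + i).factorial : ℝ) / i.factorial := by
      rw [eq_div_iff (fact_ne i)]; linarith [h1]
    have e2 : ((b + j).descFactorial b : ℝ) = ((b + j).factorial : ℝ) / j.factorial := by
      rw [eq_div_iff (fact_ne j)]; linarith [h2]
    have e3 : D = (n.factorial : ℝ) / m.factorial := by
      rw [eq_div_iff (fact_ne m)]; linarith [h3]
    rw [e1, e2, e3, pow_add, pow_add]
    have ha := fact_ne (a + i)
    have hb := fact_ne (b + j)
    have hi' := fact_ne i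
    have hj' := fact_ne j
    have hr := fact_ne (m - i - j)
    have hmm := fact_ne m
    field_simp
  rw [Finset.sum_congr rfl key]
  simp only [← Finset.mul_sum]
  rw [trinom_sum]

lemma desc_sum_one (n a b : ℕ) (p₁ p₂ : ℝ) :
    ∑ x₁ ∈ Finset.range (n + 1), ∑ x₂ ∈ Finset.range (n - x₁ + 1),
      (x₁.descFactorial a : ℝ) * (x₂.descFactorial b : ℝ) *
      ((n.factorial : ℝ) /
        ((x₁.factorial : ℝ) * (x₂.factorial : ℝ) * ((n - x₁ - x₂).factorial : ℝ))) *
        p₁ ^ x₁ * p₂ ^ x₂ * (1 - p₁ - p₂) ^ (n - x₁ - x₂)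
      = (n.descFactorial (a + b) : ℝ) * p₁ ^ a * p₂ ^ b := by
  rcases le_or_gt (a + b) n with hle | hlt
  · rw [desc_sum_eval n a b p₁ p₂ (1 - p₁ - p₂) hle]
    have : p₁ + p₂ + (1 - p₁ - p₂) = 1 := by ring
    rw [this, one_pow, mul_one]
  · rw [Nat.descFactorial_eq_zero_iff_lt.2 hlt, Nat.cast_zero, zero_mul, zero_mul]
    apply Finset.sum_eq_zero
    intro x₁ hx₁
    apply Finset.sum_eq_zero
    intro x₂ hx₂
    rw [Finset.mem_range] at hx₁ hx₂
    rcases lt_or_ge x₁ a with h | h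
    · rw [Nat.descFactorial_eq_zero_iff_lt.2 h]; simp
    · have : x₂ < b := by omega
      rw [Nat.descFactorial_eq_zero_iff_lt.2 this]; simp

/-- `(m,k)`-joint central moment of `(f₁/n, f₂/n)` for a multinomial `(f₁,f₂)`. -/
noncomputable def multCentralMoment (n m k : ℕ) (p₁ p₂ : ℝ) : ℝ :=
  ∑ x₁ ∈ Finset.range (n + 1), ∑ x₂ ∈ Finset.range (n - x₁ + 1),
    ((x₁ : ℝ) / (n : ℝ) - p₁) ^ m * ((x₂ : ℝ) / (n : ℝ) - p₂) ^ k *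
      ((n.factorial : ℝ) /
        ((x₁.factorial : ℝ) * (x₂.factorial : ℝ) * ((n - x₁ - x₂).factorial : ℝ))) *
      p₁ ^ x₁ * p₂ ^ x₂ * (1 - p₁ - p₂) ^ (n - x₁ - x₂)


lemma cd0 (x : ℕ) : ((x.descFactorial 0 : ℕ) : ℝ) = 1 := by simp
lemma cd1 (x : ℕ) : ((x.descFactorial 1 : ℕ) : ℝ) = x := by simp
lemma cd2 (x : ℕ) : ((x.descFactorial 2 : ℕ) : ℝ) = x * ((x : ℝ) - 1) := by
  rw [castDesc]
  rw [show (2 : ℕ) = 1 + 1 from rfl, Finset.prod_range_succ, Finset.prod_range_one]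
  push_cast; ring
lemma cd3 (x : ℕ) : ((x.descFactorial 3 : ℕ) : ℝ)
    = x * ((x : ℝ) - 1) * ((x : ℝ) - 2) := by
  rw [castDesc]
  rw [show (3 : ℕ) = 1 + 1 + 1 from rfl, Finset.prod_range_succ, Finset.prod_range_succ,
    Finset.prod_range_one]
  push_cast; ring
lemma cd4 (x : ℕ) : ((x.descFactorial 4 : ℕ) : ℝ)
    = x * ((x : ℝ) - 1) * ((x : ℝ) - 2) * ((x : ℝ) - 3) := by
  rw [castDesc]
  rw [show (4 : ℕ) = 1 + 1 + 1 + 1 from rfl, Finset.prod_range_succ, Finset.prod_range_succ,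
    Finset.prod_range_succ, Finset.prod_range_one]
  push_cast; ring

lemma mu21 (n : ℕ) (hn : 0 < n) (p₁ p₂ : ℝ) :
    multCentralMoment n 2 1 p₁ p₂ = -(p₁ * p₂ * (1 - 2 * p₁)) / (n : ℝ) ^ 2 := by
  have hN : (n : ℝ) ≠ 0 := Nat.cast_ne_zero.2 hn.ne'
  rw [multCentralMoment]
  have expand : (∑ x₁ ∈ Finset.range (n + 1), ∑ x₂ ∈ Finset.range (n - x₁ + 1),
      ((x₁ : ℝ) / (n : ℝ) - p₁) ^ 2 * ((x₂ : ℝ) / (n : ℝ) - p₂) ^ 1 *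
        ((n.factorial : ℝ) /
          ((x₁.factorial : ℝ) * (x₂.factorial : ℝ) * ((n - x₁ - x₂).factorial : ℝ))) *
        p₁ ^ x₁ * p₂ ^ x₂ * (1 - p₁ - p₂) ^ (n - x₁ - x₂))
      = ∑ x₁ ∈ Finset.range (n + 1), ∑ x₂ ∈ Finset.range (n - x₁ + 1),
      ((1 / (n : ℝ) ^ 3) *
        ((x₁.descFactorial 2 : ℝ) * (x₂.descFactorial 1 : ℝ) *
        ((n.factorial : ℝ) /
          ((x₁.factorial : ℝ) * (x₂.factorial : ℝ) * ((n - x₁ - x₂).factorial : ℝ))) *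
        p₁ ^ x₁ * p₂ ^ x₂ * (1 - p₁ - p₂) ^ (n - x₁ - x₂))
      + (-(p₂ / (n : ℝ) ^ 2)) *
        ((x₁.descFactorial 2 : ℝ) * (x₂.descFactorial 0 : ℝ) *
        ((n.factorial : ℝ) /
          ((x₁.factorial : ℝ) * (x₂.factorial : ℝ) * ((n - x₁ - x₂).factorial : ℝ))) *
        p₁ ^ x₁ * p₂ ^ x₂ * (1 - p₁ - p₂) ^ (n - x₁ - x₂))
      + (1 / (n : ℝ) ^ 3 - 2 * p₁ / (n : ℝ) ^ 2) *
        ((x₁.descFactorial 1 : ℝ) * (x₂.descFactorial 1 : ℝ) *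
        ((n.factorial : ℝ) /
          ((x₁.factorial : ℝ) * (x₂.factorial : ℝ) * ((n - x₁ - x₂).factorial : ℝ))) *
        p₁ ^ x₁ * p₂ ^ x₂ * (1 - p₁ - p₂) ^ (n - x₁ - x₂))
      + (-(p₂ / (n : ℝ) ^ 2) + 2 * p₁ * p₂ / (n : ℝ)) *
        ((x₁.descFactorial 1 : ℝ) * (x₂.descFactorial 0 : ℝ) *
        ((n.factorial : ℝ) /
          ((x₁.factorial : ℝ) * (x₂.factorial : ℝ) * ((n - x₁ - x₂).factorial : ℝ))) *
        p₁ ^ x₁ * p₂ ^ x₂ * (1 - p₁ - p₂) ^ (n - x₁ - x₂))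
      + (p₁ ^ 2 / (n : ℝ)) *
        ((x₁.descFactorial 0 : ℝ) * (x₂.descFactorial 1 : ℝ) *
        ((n.factorial : ℝ) /
          ((x₁.factorial : ℝ) * (x₂.factorial : ℝ) * ((n - x₁ - x₂).factorial : ℝ))) *
        p₁ ^ x₁ * p₂ ^ x₂ * (1 - p₁ - p₂) ^ (n - x₁ - x₂))
      + (-(p₁ ^ 2 * p₂)) *
        ((x₁.descFactorial 0 : ℝ) * (x₂.descFactorial 0 : ℝ) *
        ((n.factorial : ℝ) /
          ((x₁.factorial : ℝ) * (x₂.factorial : ℝ) * ((n - x₁ - x₂).factorial : ℝ))) *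
        p₁ ^ x₁ * p₂ ^ x₂ * (1 - p₁ - p₂) ^ (n - x₁ - x₂))) := by
    apply Finset.sum_congr rfl
    intro x₁ _
    apply Finset.sum_congr rfl
    intro x₂ _
    simp only [cd0, cd1, cd2]
    field_simp
    ring
  rw [expand]
  simp only [Finset.sum_add_distrib, ← Finset.mul_sum]
  rw [desc_sum_one n 2 1, desc_sum_one n 2 0, desc_sum_one n 1 1, desc_sum_one n 1 0,
    desc_sum_one n 0 1, desc_sum_one n 0 0]
  rw [cd3 n, cd2 n, cd1 n, cd0 n]
  field_simp
  ring

lemma mu22 (n : ℕ) (hn : 0 < n) (p₁ p₂ : ℝ) :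
    multCentralMoment n 2 2 p₁ p₂ =
      (p₁ * p₂ * (1 - p₁) * (1 - p₂) + 2 * p₁ ^ 2 * p₂ ^ 2) / (n : ℝ) ^ 2 +
        (p₁ * p₂ - 2 * p₁ * p₂ * (1 - p₁) * (1 - p₂) - 4 * p₁ ^ 2 * p₂ ^ 2) /
          (n : ℝ) ^ 3 := by
  have hN : (n : ℝ) ≠ 0 := Nat.cast_ne_zero.2 hn.ne'
  rw [multCentralMoment]
  have expand : (∑ x₁ ∈ Finset.range (n + 1), ∑ x₂ ∈ Finset.range (n - x₁ + 1),
      ((x₁ : ℝ) / (n : ℝ) - p₁) ^ 2 * ((x₂ : ℝ) / (n : ℝ) - p₂) ^ 2 *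
        ((n.factorial : ℝ) /
          ((x₁.factorial : ℝ) * (x₂.factorial : ℝ) * ((n - x₁ - x₂).factorial : ℝ))) *
        p₁ ^ x₁ * p₂ ^ x₂ * (1 - p₁ - p₂) ^ (n - x₁ - x₂))
      = ∑ x₁ ∈ Finset.range (n + 1), ∑ x₂ ∈ Finset.range (n - x₁ + 1),
      ((1 / (n : ℝ) ^ 2) * (1 / (n : ℝ) ^ 2) *
        ((x₁.descFactorial 2 : ℝ) * (x₂.descFactorial 2 : ℝ) *
        ((n.factorial : ℝ) /
          ((x₁.factorial : ℝ) * (x₂.factorial : ℝ) * ((n - x₁ - x₂).factorial : ℝ))) *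
        p₁ ^ x₁ * p₂ ^ x₂ * (1 - p₁ - p₂) ^ (n - x₁ - x₂))
      + (1 / (n : ℝ) ^ 2) * (1 / (n : ℝ) ^ 2 - 2 * p₂ / (n : ℝ)) *
        ((x₁.descFactorial 2 : ℝ) * (x₂.descFactorial 1 : ℝ) *
        ((n.factorial : ℝ) /
          ((x₁.factorial : ℝ) * (x₂.factorial : ℝ) * ((n - x₁ - x₂).factorial : ℝ))) *
        p₁ ^ x₁ * p₂ ^ x₂ * (1 - p₁ - p₂) ^ (n - x₁ - x₂))
      + (1 / (n : ℝ) ^ 2) * (p₂ ^ 2) *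
        ((x₁.descFactorial 2 : ℝ) * (x₂.descFactorial 0 : ℝ) *
        ((n.factorial : ℝ) /
          ((x₁.factorial : ℝ) * (x₂.factorial : ℝ) * ((n - x₁ - x₂).factorial : ℝ))) *
        p₁ ^ x₁ * p₂ ^ x₂ * (1 - p₁ - p₂) ^ (n - x₁ - x₂))
      + (1 / (n : ℝ) ^ 2 - 2 * p₁ / (n : ℝ)) * (1 / (n : ℝ) ^ 2) *
        ((x₁.descFactorial 1 : ℝ) * (x₂.descFactorial 2 : ℝ) *
        ((n.factorial : ℝ) /
          ((x₁.factorial : ℝ) * (x₂.factorial : ℝ) * ((n - x₁ - x₂).factorial : ℝ))) *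
        p₁ ^ x₁ * p₂ ^ x₂ * (1 - p₁ - p₂) ^ (n - x₁ - x₂))
      + (1 / (n : ℝ) ^ 2 - 2 * p₁ / (n : ℝ)) * (1 / (n : ℝ) ^ 2 - 2 * p₂ / (n : ℝ)) *
        ((x₁.descFactorial 1 : ℝ) * (x₂.descFactorial 1 : ℝ) *
        ((n.factorial : ℝ) /
          ((x₁.factorial : ℝ) * (x₂.factorial : ℝ) * ((n - x₁ - x₂).factorial : ℝ))) *
        p₁ ^ x₁ * p₂ ^ x₂ * (1 - p₁ - p₂) ^ (n - x₁ - x₂))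
      + (1 / (n : ℝ) ^ 2 - 2 * p₁ / (n : ℝ)) * (p₂ ^ 2) *
        ((x₁.descFactorial 1 : ℝ) * (x₂.descFactorial 0 : ℝ) *
        ((n.factorial : ℝ) /
          ((x₁.factorial : ℝ) * (x₂.factorial : ℝ) * ((n - x₁ - x₂).factorial : ℝ))) *
        p₁ ^ x₁ * p₂ ^ x₂ * (1 - p₁ - p₂) ^ (n - x₁ - x₂))
      + (p₁ ^ 2) * (1 / (n : ℝ) ^ 2) *
        ((x₁.descFactorial 0 : ℝ) * (x₂.descFactorial 2 : ℝ) *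
        ((n.factorial : ℝ) /
          ((x₁.factorial : ℝ) * (x₂.factorial : ℝ) * ((n - x₁ - x₂).factorial : ℝ))) *
        p₁ ^ x₁ * p₂ ^ x₂ * (1 - p₁ - p₂) ^ (n - x₁ - x₂))
      + (p₁ ^ 2) * (1 / (n : ℝ) ^ 2 - 2 * p₂ / (n : ℝ)) *
        ((x₁.descFactorial 0 : ℝ) * (x₂.descFactorial 1 : ℝ) *
        ((n.factorial : ℝ) /
          ((x₁.factorial : ℝ) * (x₂.factorial : ℝ) * ((n - x₁ - x₂).factorial : ℝ))) *
        p₁ ^ x₁ * p₂ ^ x₂ * (1 - p₁ - p₂) ^ (n - x₁ - x₂))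
      + (p₁ ^ 2) * (p₂ ^ 2) *
        ((x₁.descFactorial 0 : ℝ) * (x₂.descFactorial 0 : ℝ) *
        ((n.factorial : ℝ) /
          ((x₁.factorial : ℝ) * (x₂.factorial : ℝ) * ((n - x₁ - x₂).factorial : ℝ))) *
        p₁ ^ x₁ * p₂ ^ x₂ * (1 - p₁ - p₂) ^ (n - x₁ - x₂))) := by
    apply Finset.sum_congr rfl
    intro x₁ _
    apply Finset.sum_congr rfl
    intro x₂ _
    simp only [cd0, cd1, cd2]
    field_simp
    ring
  rw [expand]
  simp only [Finset.sum_add_distrib, ← Finset.mul_sum]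
  rw [desc_sum_one n 2 2, desc_sum_one n 2 1, desc_sum_one n 2 0, desc_sum_one n 1 2, desc_sum_one n 1 1, desc_sum_one n 1 0, desc_sum_one n 0 2, desc_sum_one n 0 1, desc_sum_one n 0 0]
  rw [cd4 n, cd3 n, cd2 n, cd1 n, cd0 n]
  field_simp
  ring

/-- Explicit formulas for `μ_{2,1}` and `μ_{2,2}`. -/
theorem multCentralMoment_21_22 (n : ℕ) (hn : 0 < n) (p₁ p₂ : ℝ)
    (hp₁ : 0 ≤ p₁) (hp₂ : 0 ≤ p₂) (hsum : p₁ + p₂ ≤ 1) :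
    multCentralMoment n 2 1 p₁ p₂ = -(p₁ * p₂ * (1 - 2 * p₁)) / (n : ℝ) ^ 2 ∧
    multCentralMoment n 2 2 p₁ p₂ =
      (p₁ * p₂ * (1 - p₁) * (1 - p₂) + 2 * p₁ ^ 2 * p₂ ^ 2) / (n : ℝ) ^ 2 +
        (p₁ * p₂ - 2 * p₁ * p₂ * (1 - p₁) * (1 - p₂) - 4 * p₁ ^ 2 * p₂ ^ 2) /
          (n : ℝ) ^ 3 :=
  ⟨mu21 n hn p₁ p₂, mu22 n hn p₁ p₂⟩
end

section
/- The function x ↦ x^2 (ln x)^2 admits at each p > 0 the Taylor expansion x^2 ln^2 x = p^2 ln^2 p + 2 p ln p (ln p + 1)(x-p) + (ln^2 p + 3 ln p + 1)(x-p)^2 + 4 Σ_{m=1}^{∞} (-1)^{m+1} [ln p - S_{m-1} + 3/2] (x-p)^{m+2} / (m(m+1)(m+2) p^m), convergent for |x - p| < p, where S_k is the k-th harmonic number. -/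
/-!
Put `x = p (1 + t)` with `|t| < 1`, so that `x² ln² x = p² (1 + t)² (ln p + ln (1 + t))²`.
The Cauchy square of `ln (1 + t) = ∑ (-1)ⁿ tⁿ⁺¹ / (n + 1)` is
`ln² (1 + t) = ∑ 2 (-1)ⁿ S_{n+1} tⁿ⁺² / (n + 2)`, hence
`(L + ln (1 + t))² - L² = ∑ 2 (-1)ⁿ (L - S_n) tⁿ⁺¹ / (n + 1)`.
Multiplying by `(1 + t)²` combines three consecutive coefficients of this series into each
coefficient of the stated one.
-/

/-- Harmonic numbers: `S k = ∑_{j=1}^k 1/j`, with `S 0 = 0`. -/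
noncomputable def harmonicS (k : ℕ) : ℝ := ∑ j ∈ Finset.range k, 1 / ((j : ℝ) + 1)

open Finset Real

lemma harmonicS_succ (k : ℕ) : harmonicS (k + 1) = harmonicS k + 1 / ((k : ℝ) + 1) :=
  sum_range_succ _ _

noncomputable def logOneAddTerm (t : ℝ) (n : ℕ) : ℝ := (-1) ^ n * t ^ (n + 1) / (n + 1)

lemma hasSum_logOneAddTerm {t : ℝ} (ht : |t| < 1) :
    HasSum (logOneAddTerm t) (log (1 + t)) := by
  have h := (hasSum_pow_div_log_of_abs_lt_one (x := -t) (by rwa [abs_neg])).neg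
  rw [sub_neg_eq_add, neg_neg] at h
  refine h.congr_fun fun n => ?_
  rw [logOneAddTerm, neg_pow, pow_succ]
  ring

lemma summable_norm_logOneAddTerm {t : ℝ} (ht : |t| < 1) :
    Summable fun n => ‖logOneAddTerm t n‖ := by
  refine (hasSum_pow_div_log_of_abs_lt_one (x := |t|) (by rwa [abs_abs])).summable.congr
    fun n => ?_
  rw [logOneAddTerm, norm_div, norm_mul, norm_pow, norm_pow, norm_neg, norm_one, one_pow,
    one_mul, Real.norm_eq_abs, Real.norm_of_nonneg (by positivity)]

/-- Uses `1 / ((k + 1) (m + 1)) = (1 / (k + 1) + 1 / (m + 1)) / (k + m + 2)` and the symmetry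
`k ↔ n - k`. -/
lemma sum_range_logOneAddTerm_mul (t : ℝ) (n : ℕ) :
    ∑ k ∈ range (n + 1), logOneAddTerm t k * logOneAddTerm t (n - k) =
      (-1) ^ n * 2 * harmonicS (n + 1) * t ^ (n + 2) / (n + 2) := by
  have hterm : ∀ k ∈ range (n + 1), logOneAddTerm t k * logOneAddTerm t (n - k) =
      (-1) ^ n * t ^ (n + 2) / (n + 2) *
        (1 / ((k : ℝ) + 1) + 1 / (((n - k : ℕ) : ℝ) + 1)) := by
    intro k hk
    obtain ⟨m, rfl⟩ := Nat.exists_eq_add_of_le (Nat.lt_succ_iff.mp (mem_range.mp hk))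
    rw [Nat.add_sub_cancel_left, logOneAddTerm, logOneAddTerm]
    push_cast
    field_simp
    ring
  have hreflect : ∑ k ∈ range (n + 1), 1 / (((n - k : ℕ) : ℝ) + 1) = harmonicS (n + 1) := by
    rw [harmonicS]
    simpa using sum_range_reflect (fun k : ℕ => 1 / ((k : ℝ) + 1)) (n + 1)
  rw [sum_congr rfl hterm, ← mul_sum, sum_add_distrib, hreflect, harmonicS]
  ring

lemma hasSum_log_one_add_sq {t : ℝ} (ht : |t| < 1) :
    HasSum (fun n : ℕ => (-1) ^ n * 2 * harmonicS (n + 1) * t ^ (n + 2) / (n + 2))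
      (log (1 + t) ^ 2) := by
  have h := hasSum_sum_range_mul_of_summable_norm (summable_norm_logOneAddTerm ht)
    (summable_norm_logOneAddTerm ht)
  rw [(hasSum_logOneAddTerm ht).tsum_eq, ← sq] at h
  simpa only [sum_range_logOneAddTerm_mul] using h

theorem HasSum.one_add_sq_mul {R : Type*} [Ring R] [TopologicalSpace R] [IsTopologicalRing R]
    {f : ℕ → R} {s : R} (hf : HasSum f s) (x : R) :
    HasSum (fun n => f (n + 2) + 2 * x * f (n + 1) + x ^ 2 * f n)
      ((1 + x) ^ 2 * s - (f 0 + f 1 + 2 * x * f 0)) := by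
  have h2 := (hasSum_nat_add_iff' 2).mpr hf
  have h1 := ((hasSum_nat_add_iff' 1).mpr hf).mul_left (2 * x)
  have hvalue : (1 + x) ^ 2 * s - (f 0 + f 1 + 2 * x * f 0) =
      s - ∑ i ∈ range 2, f i + 2 * x * (s - ∑ i ∈ range 1, f i) + x ^ 2 * s := by
    simp only [sum_range_succ, sum_range_zero]
    noncomm_ring
  rw [hvalue]
  exact (h2.add h1).add (hf.mul_left (x ^ 2))

/-- For `n = 0` (where `harmonicS 0 = 0`) this is the term `2 L t` of `2 L log (1 + t)` alone; for
`n ≥ 1` the series of `log² (1 + t)` contributes as well. -/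
noncomputable def addLogSqTerm (L t : ℝ) (n : ℕ) : ℝ :=
  2 * (-1) ^ n * (L - harmonicS n) * t ^ (n + 1) / (n + 1)

lemma hasSum_addLogSqTerm (L : ℝ) {t : ℝ} (ht : |t| < 1) :
    HasSum (addLogSqTerm L t) ((L + log (1 + t)) ^ 2 - L ^ 2) := by
  have hlog := (hasSum_nat_add_iff' 1).mpr (hasSum_logOneAddTerm ht)
  have hshift : HasSum (fun n => addLogSqTerm L t (n + 1))
      (2 * L * (log (1 + t) - ∑ i ∈ range 1, logOneAddTerm t i) + log (1 + t) ^ 2) :=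
    ((hlog.mul_left (2 * L)).add (hasSum_log_one_add_sq ht)).congr_fun fun n => by
      rw [addLogSqTerm, logOneAddTerm, harmonicS_succ]
      push_cast
      field_simp
      ring
  have hvalue : (L + log (1 + t)) ^ 2 - L ^ 2 =
      2 * L * (log (1 + t) - ∑ i ∈ range 1, logOneAddTerm t i) + log (1 + t) ^ 2 +
        ∑ i ∈ range 1, addLogSqTerm L t i := by
    simp only [sum_range_one, logOneAddTerm, addLogSqTerm, harmonicS, sum_range_zero]
    push_cast
    ring
  rw [hvalue]
  exact (hasSum_nat_add_iff 1).mp hshift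

lemma hasSum_one_add_sq_mul_add_log_one_add_sq (L : ℝ) {t : ℝ} (ht : |t| < 1) :
    HasSum (fun j : ℕ => 4 * (-1) ^ j * (L - harmonicS j + 3 / 2) * t ^ (j + 3) /
        ((j + 1) * (j + 2) * (j + 3)))
      ((1 + t) ^ 2 * (L + log (1 + t)) ^ 2 -
        (L ^ 2 + 2 * L * (L + 1) * t + (L ^ 2 + 3 * L + 1) * t ^ 2)) := by
  have hvalue : (1 + t) ^ 2 * (L + log (1 + t)) ^ 2 -
      (L ^ 2 + 2 * L * (L + 1) * t + (L ^ 2 + 3 * L + 1) * t ^ 2) =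
      (1 + t) ^ 2 * ((L + log (1 + t)) ^ 2 - L ^ 2) -
        (addLogSqTerm L t 0 + addLogSqTerm L t 1 + 2 * t * addLogSqTerm L t 0) := by
    simp only [addLogSqTerm, harmonicS, sum_range_one, sum_range_zero]
    push_cast
    ring
  rw [hvalue]
  refine ((hasSum_addLogSqTerm L ht).one_add_sq_mul t).congr_fun fun j => ?_
  rw [addLogSqTerm, addLogSqTerm, addLogSqTerm, harmonicS_succ (j + 1), harmonicS_succ j]
  push_cast
  field_simp
  ring

/-- The series is indexed by `j` with the paper's `m = j + 1 ≥ 1`. -/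
theorem taylor_sq_log_sq (p x : ℝ) (hp : 0 < p) (hx : |x - p| < p) :
    HasSum
      (fun j : ℕ =>
        4 * (-1 : ℝ) ^ (j + 2) * (Real.log p - harmonicS j + 3 / 2) *
          (x - p) ^ (j + 3) /
          (((j : ℝ) + 1) * ((j : ℝ) + 2) * ((j : ℝ) + 3) * p ^ (j + 1)))
      (x ^ 2 * (Real.log x) ^ 2 -
        (p ^ 2 * (Real.log p) ^ 2 +
          2 * p * Real.log p * (Real.log p + 1) * (x - p) +
          ((Real.log p) ^ 2 + 3 * Real.log p + 1) * (x - p) ^ 2)) := by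
  set t := (x - p) / p
  have ht : |t| < 1 := by rwa [abs_div, abs_of_pos hp, div_lt_one hp]
  have hxp : x - p = p * t := (mul_div_cancel₀ _ hp.ne').symm
  have hx_eq : x = p * (1 + t) := by linear_combination hxp
  have hlog : log x = log p + log (1 + t) := by
    rw [hx_eq, log_mul hp.ne' (by linarith [(abs_lt.mp ht).1])]
  have h := (hasSum_one_add_sq_mul_add_log_one_add_sq (log p) ht).mul_left (p ^ 2)
  have hvalue : x ^ 2 * log x ^ 2 - (p ^ 2 * log p ^ 2 +
      2 * p * log p * (log p + 1) * (x - p) + (log p ^ 2 + 3 * log p + 1) * (x - p) ^ 2) =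
      p ^ 2 * ((1 + t) ^ 2 * (log p + log (1 + t)) ^ 2 -
        (log p ^ 2 + 2 * log p * (log p + 1) * t + (log p ^ 2 + 3 * log p + 1) * t ^ 2)) := by
    rw [hlog, hx_eq]
    ring
  rw [hvalue]
  refine h.congr_fun fun j => ?_
  rw [hxp, mul_pow, pow_add p j 3, pow_add p j 1]
  field_simp
  ring
end

section
/- Let (f_0,...,f_{M-1}) be multinomial with n trials and strictly positive probabilities (p_0,...,p_{M-1}) summing to 1, \hat{p}_j = f_j/n, and \hat{H} = -Σ_j \hat{p}_j ln \hat{p}_j (with 0 ln 0 = 0). Then E[\hat{H}] = H - (M-1)/(2n) + (1/(12n^2))(1 - Σ_j 1/p_j) + (1/(12n^3)) Σ_j (1/p_j - 1/p_j^2) + O(n^{-4}), where H = -Σ_j p_j ln p_j. -/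
/-!
Each count `f j` is `Binomial(n, p j)`, so `E[Ĥ] = -∑ j E[X log X]` with `X = f j / n`, and it
suffices to expand `E[X log X]` for a single binomial proportion. On `[0, 1]`, `x log x` differs
from `x T(x)`, where `T` is the degree-7 Taylor polynomial of `log` at `p`, by `O((x - p)^8)`, and the
eighth central moment of `X` is `O(n⁻⁴)`. The expectation of a polynomial `g` of degree `< d` in the
count is exact: Newton's forward-difference formula and `E[(f choose r)] = (n choose r) p^r` give
`E[g(f)] = ∑_{r<d} (n choose r) p^r Δ^r g(0)`, which turns `E[X T(X)]` and `E[(X - p)^8]` into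
explicit rational functions of `n`.
-/

/-- Probability of the outcome `f` under the multinomial distribution with
`n` trials and cell probabilities `p`. -/
noncomputable def multProb {M : ℕ} (p : Fin M → ℝ) (f : Fin M → ℕ) : ℝ :=
  (Nat.multinomial Finset.univ f : ℝ) * ∏ j, p j ^ f j

/-- Plug-in (empirical frequencies) Shannon entropy of the outcome `f`
(natural logarithm, convention `0 ln 0 = 0` since `Real.log 0 = 0`). -/
noncomputable def plugInEntropy {M : ℕ} (n : ℕ) (f : Fin M → ℕ) : ℝ :=
  -∑ j, ((f j : ℝ) / (n : ℝ)) * Real.log ((f j : ℝ) / (n : ℝ))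

/-- `E[Ĥ]` for the multinomial plug-in entropy estimator. -/
noncomputable def expEntropy (M n : ℕ) (p : Fin M → ℝ) : ℝ :=
  ∑ f ∈ Finset.Nat.antidiagonalTuple M n, multProb p f * plugInEntropy n f

/-- `Var(Ĥ)` for the multinomial plug-in entropy estimator. -/
noncomputable def varEntropy (M n : ℕ) (p : Fin M → ℝ) : ℝ :=
  (∑ f ∈ Finset.Nat.antidiagonalTuple M n, multProb p f * (plugInEntropy n f) ^ 2)
    - (expEntropy M n p) ^ 2

/-- Shannon entropy of the probability vector `p` (natural logarithm). -/
noncomputable def shannonH {M : ℕ} (p : Fin M → ℝ) : ℝ :=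
  -∑ j, p j * Real.log (p j)

open Finset fwdDiff Real

noncomputable def binomExpect (n : ℕ) (p : ℝ) (h : ℕ → ℝ) : ℝ :=
  ∑ k ∈ range (n + 1), (n.choose k : ℝ) * p ^ k * (1 - p) ^ (n - k) * h k

namespace binomExpect

variable {n : ℕ} {p : ℝ}

lemma sub (h h' : ℕ → ℝ) :
    binomExpect n p (fun k => h k - h' k) = binomExpect n p h - binomExpect n p h' := by
  simp only [binomExpect, ← sum_sub_distrib, mul_sub]

lemma const_mul (c : ℝ) (h : ℕ → ℝ) :
    binomExpect n p (fun k => c * h k) = c * binomExpect n p h := by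
  simp only [binomExpect, mul_sum]
  exact sum_congr rfl fun k _ => by ring

lemma abs_le (hp₀ : 0 ≤ p) (hp₁ : p ≤ 1) {h h' : ℕ → ℝ} (hh : ∀ k ≤ n, |h k| ≤ h' k) :
    |binomExpect n p h| ≤ binomExpect n p h' := by
  refine (abs_sum_le_sum_abs _ _).trans (sum_le_sum fun k hk => ?_)
  have hw : 0 ≤ (n.choose k : ℝ) * p ^ k * (1 - p) ^ (n - k) := by
    have : 0 ≤ 1 - p := by linarith
    positivity
  rw [abs_mul, abs_of_nonneg hw]
  exact mul_le_mul_of_nonneg_left (hh k (Nat.lt_succ_iff.mp (mem_range.mp hk))) hw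

lemma choose (n r : ℕ) (p : ℝ) :
    binomExpect n p (fun k => (k.choose r : ℝ)) = n.choose r * p ^ r := by
  rcases lt_or_ge n r with hnr | hrn
  · rw [Nat.choose_eq_zero_of_lt hnr, Nat.cast_zero, zero_mul]
    refine sum_eq_zero fun k hk => ?_
    dsimp only
    rw [Nat.choose_eq_zero_of_lt ((mem_range.mp hk).trans_le hnr), Nat.cast_zero, mul_zero]
  obtain ⟨m, rfl⟩ := Nat.exists_eq_add_of_le hrn
  have hterm : ∀ j ∈ range (m + 1), ((r + m).choose (r + j) : ℝ) * p ^ (r + j) *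
      (1 - p) ^ (r + m - (r + j)) * ((r + j).choose r : ℝ)
      = (r + m).choose r * p ^ r * (m.choose j * p ^ j * (1 - p) ^ (m - j)) := by
    intro j _
    have hmul := Nat.choose_mul (n := r + m) (k := r + j) (s := r) (Nat.le_add_right r j)
    rw [Nat.add_sub_cancel_left, Nat.add_sub_cancel_left] at hmul
    rw [Nat.add_sub_add_left, pow_add]
    linear_combination (p ^ r * p ^ j * (1 - p) ^ (m - j)) * (by exact_mod_cast hmul :
      ((r + m).choose (r + j) : ℝ) * (r + j).choose r = (r + m).choose r * m.choose j)
  rw [binomExpect, add_assoc, sum_range_add, sum_eq_zero fun k hk => by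
      rw [Nat.choose_eq_zero_of_lt (mem_range.mp hk), Nat.cast_zero, mul_zero], zero_add,
    sum_congr rfl hterm, ← mul_sum]
  have hsum : ∑ j ∈ range (m + 1), (m.choose j : ℝ) * p ^ j * (1 - p) ^ (m - j) = 1 :=
    calc _ = (p + (1 - p)) ^ m := by rw [add_pow]; exact sum_congr rfl fun j _ => by ring
      _ = 1 := by rw [add_sub_cancel, one_pow]
  rw [hsum, mul_one]

lemma eq_sum_fwdDiff_iter (n : ℕ) (p : ℝ) (g : ℝ → ℝ) :
    binomExpect n p (fun k => g k)
      = ∑ r ∈ range (n + 1), (n.choose r : ℝ) * p ^ r * (Δ_[1])^[r] g 0 := by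
  have newton : ∀ k ∈ range (n + 1),
      g k = ∑ r ∈ range (n + 1), (k.choose r : ℝ) * (Δ_[1])^[r] g 0 := by
    intro k hk
    have hsub : range (k + 1) ⊆ range (n + 1) := range_subset_range.mpr (mem_range.mp hk)
    rw [← sum_subset hsub fun r _ hr => by
      rw [Nat.choose_eq_zero_of_lt (by simpa using hr), Nat.cast_zero, zero_mul]]
    simpa [nsmul_eq_mul] using shift_eq_sum_fwdDiff_iter 1 g k 0
  calc binomExpect n p (fun k => g k)
      = ∑ k ∈ range (n + 1), ∑ r ∈ range (n + 1),
          (n.choose k : ℝ) * p ^ k * (1 - p) ^ (n - k) * (k.choose r : ℝ) * (Δ_[1])^[r] g 0 := by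
        refine sum_congr rfl fun k hk => ?_
        dsimp only
        rw [newton k hk, mul_sum]
        exact sum_congr rfl fun r _ => by ring
    _ = ∑ r ∈ range (n + 1), binomExpect n p (fun k => (k.choose r : ℝ)) * (Δ_[1])^[r] g 0 := by
        rw [sum_comm]
        simp only [binomExpect, sum_mul]
    _ = _ := by simp only [choose]

lemma eq_sum_fwdDiff_iter_of_fwdDiff_iter_eq_zero {d : ℕ} {g : ℝ → ℝ}
    (hg : (Δ_[1])^[d] g = 0) (n : ℕ) (p : ℝ) :
    binomExpect n p (fun k => g k) = ∑ r ∈ range d, (n.choose r : ℝ) * p ^ r * (Δ_[1])^[r] g 0 := by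
  have hchoose : ∀ r ∈ range (n + 1 + d), r ∉ range (n + 1) →
      (n.choose r : ℝ) * p ^ r * (Δ_[1])^[r] g 0 = 0 := fun r _ hr => by
    rw [Nat.choose_eq_zero_of_lt (by simpa using hr), Nat.cast_zero, zero_mul, zero_mul]
  have hdiff : ∀ r ∈ range (n + 1 + d), r ∉ range d →
      (n.choose r : ℝ) * p ^ r * (Δ_[1])^[r] g 0 = 0 := fun r _ hr => by
    obtain ⟨s, rfl⟩ := Nat.exists_eq_add_of_le (by simpa using hr)
    have hfix : Δ_[1] (0 : ℝ → ℝ) = 0 := by ext; simp [fwdDiff]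
    rw [add_comm, Function.iterate_add_apply, hg, Function.iterate_fixed hfix, Pi.zero_apply,
      mul_zero]
  rw [eq_sum_fwdDiff_iter, sum_subset (range_subset_range.mpr (by omega)) hchoose,
    sum_subset (range_subset_range.mpr (by omega)) hdiff]

end binomExpect

section Taylor

open Polynomial

noncomputable def logTaylor (m : ℕ) (p : ℝ) : ℝ[X] :=
  C (log p) + ∑ i ∈ range m, C ((-1) ^ i / (i + 1 : ℝ)) * (C p⁻¹ * (X - C p)) ^ (i + 1)

lemma natDegree_logTaylor_le (m : ℕ) (p : ℝ) : (logTaylor m p).natDegree ≤ m := by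
  refine natDegree_add_le_of_degree_le (by simp) (natDegree_sum_le_of_forall_le _ _ fun i hi => ?_)
  refine (natDegree_C_mul_le _ _).trans ((natDegree_pow_le).trans ?_)
  have : (C p⁻¹ * (X - C p)).natDegree ≤ 1 :=
    (natDegree_C_mul_le _ _).trans (natDegree_X_sub_C_le _)
  have hi := mem_range.mp hi
  nlinarith

lemma eval_logTaylor (m : ℕ) (p x : ℝ) : (logTaylor m p).eval x =
    log p + ∑ i ∈ range m, (-1) ^ i / (i + 1) * ((x - p) / p) ^ (i + 1) := by
  simp [logTaylor, eval_finsetSum, div_eq_inv_mul]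

lemma fwdDiff_iter_eval_div_eq_zero {Q : ℝ[X]} {d : ℕ} (hQ : Q.natDegree < d) (a : ℝ) :
    (Δ_[1])^[d] (fun y => Q.eval (y / a)) = 0 := by
  have hcomp : (fun y => Q.eval (y / a)) = (Q.comp (C a⁻¹ * X)).eval := by
    ext; simp [div_eq_inv_mul]
  rw [hcomp]
  refine Polynomial.fwdDiff_iter_eq_zero_of_degree_lt (lt_of_le_of_lt natDegree_comp_le ?_)
  calc Q.natDegree * (C a⁻¹ * X).natDegree ≤ Q.natDegree * 1 :=
        Nat.mul_le_mul_left _ ((natDegree_C_mul_le _ X).trans natDegree_X_le)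
    _ < d := by rwa [mul_one]

lemma abs_mul_log_sub_mul_eval_logTaylor_le_of_near {m : ℕ} {p x : ℝ} (hp : 0 < p)
    (hx : x ∈ Set.Icc (0 : ℝ) 1) (hxp : |x - p| ≤ p / 2) :
    |x * log x - x * (logTaylor m p).eval x| ≤ 2 / p ^ (m + 1) * |x - p| ^ (m + 1) := by
  set u := (x - p) / p with hu
  have hu_half : |u| ≤ 1 / 2 := by
    rw [hu, abs_div, abs_of_pos hp, div_le_iff₀ hp]; linarith
  have hx_pos : 0 < x := by
    have := (abs_le.mp hxp).1; linarith
  have hseries := Real.abs_log_sub_add_sum_range_le (x := -u) (by rw [abs_neg]; linarith) m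
  have hlog : log (1 - -u) = log x - log p := by
    rw [← log_div hx_pos.ne' hp.ne', hu]; congr 1; field_simp; ring
  have hsum : ∑ i ∈ range m, (-u) ^ (i + 1) / (i + 1)
      = -∑ i ∈ range m, (-1) ^ i / (i + 1) * u ^ (i + 1) := by
    rw [← sum_neg_distrib]
    exact sum_congr rfl fun i _ => by rw [neg_pow, pow_succ]; ring
  rw [hlog, hsum, abs_neg] at hseries
  calc |x * log x - x * (logTaylor m p).eval x|
      = |x| * |(-∑ i ∈ range m, (-1) ^ i / (i + 1) * u ^ (i + 1)) + (log x - log p)| := by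
        rw [eval_logTaylor, ← hu, ← abs_mul]; congr 1; ring
    _ ≤ 1 * (|u| ^ (m + 1) / (1 - |u|)) := by
        gcongr
        rw [abs_of_pos hx_pos]; exact hx.2
    _ ≤ 2 * |u| ^ (m + 1) := by
        rw [one_mul, div_le_iff₀ (by linarith)]
        nlinarith [pow_nonneg (abs_nonneg u) (m + 1)]
    _ = 2 / p ^ (m + 1) * |x - p| ^ (m + 1) := by
        rw [hu, abs_div, abs_of_pos hp, div_pow]; ring

lemma exists_abs_mul_log_sub_mul_eval_logTaylor_le (m : ℕ) {p : ℝ} (hp : 0 < p) :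
    ∃ K, ∀ x ∈ Set.Icc (0 : ℝ) 1,
      |x * log x - x * (logTaylor m p).eval x| ≤ K * |x - p| ^ (m + 1) := by
  obtain ⟨B, hB⟩ := (isCompact_Icc (a := (0 : ℝ)) (b := 1)).exists_bound_of_continuousOn
    (f := fun x => x * log x - x * (logTaylor m p).eval x) (by fun_prop)
  refine ⟨2 / p ^ (m + 1) + |B| * (2 / p) ^ (m + 1), fun x hx => ?_⟩
  rcases le_or_gt |x - p| (p / 2) with hnear | hfar
  · refine (abs_mul_log_sub_mul_eval_logTaylor_le_of_near hp hx hnear).trans ?_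
    gcongr
    exact le_add_of_nonneg_right (by positivity)
  · have hfar' : 1 ≤ (2 / p * |x - p|) ^ (m + 1) := by
      refine one_le_pow₀ ?_
      rw [div_mul_eq_mul_div, le_div_iff₀ hp]; linarith
    calc |x * log x - x * (logTaylor m p).eval x| ≤ |B| * 1 := by
          simpa using (hB x hx).trans (le_abs_self B)
      _ ≤ |B| * (2 / p * |x - p|) ^ (m + 1) := by gcongr
      _ ≤ _ := by
        rw [mul_pow, ← mul_assoc, add_mul]
        exact le_add_of_nonneg_left (by positivity)

/- The coefficients of the two expansions below were computed with computer algebra; the proofs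
only check them with `ring`. -/
noncomputable def entropyBiasRemainderCoeff (p : ℝ) : ℕ → ℝ
  | 0 => 797 / (60 * p ^ 3) - 211 / (4 * p ^ 2) + 473 / (6 * p) - 105 / 2 + 197 / 15 * p
  | 1 => 687 / (10 * p ^ 4) - 5347 / (10 * p ^ 3) + 4543 / (3 * p ^ 2) - 6064 / (3 * p) + 1295
      - 322 * p
  | 2 => 713 / (42 * p ^ 5) - 681 / (2 * p ^ 4) + 5912 / (3 * p ^ 3) - 5050 / p ^ 2 + 6492 / p
      - 4116 + 7188 / 7 * p
  | 3 => 1 / (7 * p ^ 6) - 127 / (7 * p ^ 5) + 276 / p ^ 4 - 1458 / p ^ 3 + 3600 / p ^ 2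
      - 4560 / p + 2880 - 720 * p
  | _ => 0

noncomputable def binomCentralMomentEightCoeff (p : ℝ) : ℕ → ℝ
  | 0 => 105 * (p * (1 - p)) ^ 4
  | 1 => 70 * (p * (1 - p)) ^ 3 * (7 - 34 * (p * (1 - p)))
  | 2 => 7 * (p * (1 - p)) ^ 2 * (17 - 308 * (p * (1 - p)) + 1044 * (p * (1 - p)) ^ 2)
  | 3 => p * (1 - p) *
      (1 - 126 * (p * (1 - p)) + 1680 * (p * (1 - p)) ^ 2 - 5040 * (p * (1 - p)) ^ 3)
  | _ => 0

lemma binomExpect_mul_eval_logTaylor {n : ℕ} (hn : n ≠ 0) {p : ℝ} (hp : p ≠ 0) :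
    binomExpect n p (fun k : ℕ => (k : ℝ) / n * (logTaylor 7 p).eval ((k : ℝ) / n))
      = p * log p + (1 - p) / (2 * n) - (p - 1 / p) / (12 * n ^ 2)
        - (1 / p - 1 / p ^ 2) / (12 * n ^ 3)
        + ∑ i ∈ range 4, entropyBiasRemainderCoeff p i / n ^ (i + 4) := by
  have hdeg : (X * logTaylor 7 p).natDegree < 9 :=
    (natDegree_mul_le.trans (add_le_add natDegree_X_le (natDegree_logTaylor_le 7 p))).trans_lt
      (by norm_num)
  have hΔ := fwdDiff_iter_eval_div_eq_zero hdeg (n : ℝ)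
  simp only [eval_mul, eval_X] at hΔ
  have hn' : (n : ℝ) ≠ 0 := Nat.cast_ne_zero.mpr hn
  rw [binomExpect.eq_sum_fwdDiff_iter_of_fwdDiff_iter_eq_zero hΔ]
  simp only [fwdDiff_iter_eq_sum_shift, sum_range_succ, sum_range_zero, eval_logTaylor,
    Nat.cast_choose_eq_descPochhammer_div, descPochhammer_succ_eval, descPochhammer_zero,
    eval_one, entropyBiasRemainderCoeff]
  norm_num [Nat.choose, Nat.factorial]
  field_simp
  ring

lemma binomExpect_sub_pow_eight {n : ℕ} (hn : n ≠ 0) (p : ℝ) :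
    binomExpect n p (fun k : ℕ => ((k : ℝ) / n - p) ^ 8)
      = ∑ i ∈ range 4, binomCentralMomentEightCoeff p i / n ^ (i + 4) := by
  have hdeg : ((X - C p) ^ 8).natDegree < 9 :=
    (natDegree_pow_le.trans (Nat.mul_le_mul_left 8 (natDegree_X_sub_C_le p))).trans_lt
      (by norm_num)
  have hΔ := fwdDiff_iter_eval_div_eq_zero hdeg (n : ℝ)
  simp only [eval_pow, eval_sub, eval_X, eval_C] at hΔ
  have hn' : (n : ℝ) ≠ 0 := Nat.cast_ne_zero.mpr hn
  rw [binomExpect.eq_sum_fwdDiff_iter_of_fwdDiff_iter_eq_zero hΔ]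
  simp only [fwdDiff_iter_eq_sum_shift, sum_range_succ, sum_range_zero,
    Nat.cast_choose_eq_descPochhammer_div, descPochhammer_succ_eval, descPochhammer_zero,
    eval_one, binomCentralMomentEightCoeff]
  norm_num [Nat.choose, Nat.factorial]
  field_simp
  ring

end Taylor

lemma abs_sum_div_pow_le {x : ℝ} (hx : 1 ≤ x) (s : Finset ℕ) (a : ℕ → ℝ) (k : ℕ) :
    |∑ i ∈ s, a i / x ^ (i + k)| ≤ (∑ i ∈ s, |a i|) / x ^ k := by
  have hx₀ : 0 < x := zero_lt_one.trans_le hx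
  rw [sum_div]
  refine (abs_sum_le_sum_abs _ _).trans (sum_le_sum fun i _ => ?_)
  rw [abs_div, abs_of_pos (pow_pos hx₀ _)]
  exact div_le_div_of_nonneg_left (abs_nonneg _) (pow_pos hx₀ _)
    (pow_le_pow_right₀ hx (Nat.le_add_left k i))

lemma exists_abs_binomExpect_mul_log_sub_le {p : ℝ} (hp : 0 < p) (hp₁ : p ≤ 1) :
    ∃ C : ℝ, ∀ n : ℕ, 1 ≤ n →
      |binomExpect n p (fun k => (k : ℝ) / n * log ((k : ℝ) / n))
        - (p * log p + (1 - p) / (2 * n) - (p - 1 / p) / (12 * n ^ 2)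
          - (1 / p - 1 / p ^ 2) / (12 * n ^ 3))| ≤ C / (n : ℝ) ^ 4 := by
  obtain ⟨K, hK⟩ := exists_abs_mul_log_sub_mul_eval_logTaylor_le 7 hp
  refine ⟨|K| * ∑ i ∈ range 4, |binomCentralMomentEightCoeff p i|
    + ∑ i ∈ range 4, |entropyBiasRemainderCoeff p i|, fun n hn => ?_⟩
  have hn₀ : n ≠ 0 := Nat.one_le_iff_ne_zero.mp hn
  have hn₁ : (1 : ℝ) ≤ n := Nat.one_le_cast.mpr hn
  have htaylor : |binomExpect n p (fun k => (k : ℝ) / n * log ((k : ℝ) / n))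
      - binomExpect n p (fun k => (k : ℝ) / n * (logTaylor 7 p).eval ((k : ℝ) / n))|
      ≤ |K| * ((∑ i ∈ range 4, |binomCentralMomentEightCoeff p i|) / n ^ 4) := by
    have hpoint : ∀ k ≤ n, |(k : ℝ) / n * log ((k : ℝ) / n)
        - (k : ℝ) / n * (logTaylor 7 p).eval ((k : ℝ) / n)| ≤ K * ((k : ℝ) / n - p) ^ 8 := by
      intro k hk
      have hx : (k : ℝ) / n ∈ Set.Icc (0 : ℝ) 1 :=
        ⟨by positivity, div_le_one_of_le₀ (Nat.cast_le.mpr hk) (Nat.cast_nonneg n)⟩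
      simpa [Even.pow_abs (by decide : Even 8)] using hK _ hx
    rw [← binomExpect.sub]
    calc _ ≤ binomExpect n p (fun k => K * ((k : ℝ) / n - p) ^ 8) :=
          binomExpect.abs_le hp.le hp₁ hpoint
      _ = K * ∑ i ∈ range 4, binomCentralMomentEightCoeff p i / n ^ (i + 4) := by
          rw [binomExpect.const_mul, binomExpect_sub_pow_eight hn₀]
      _ ≤ |K| * |∑ i ∈ range 4, binomCentralMomentEightCoeff p i / n ^ (i + 4)| := by
          rw [← abs_mul]; exact le_abs_self _
      _ ≤ _ := by gcongr; exact abs_sum_div_pow_le hn₁ _ _ 4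
  rw [add_div, mul_div_assoc]
  calc _ ≤ |binomExpect n p (fun k => (k : ℝ) / n * log ((k : ℝ) / n))
          - binomExpect n p (fun k => (k : ℝ) / n * (logTaylor 7 p).eval ((k : ℝ) / n))|
        + |∑ i ∈ range 4, entropyBiasRemainderCoeff p i / n ^ (i + 4)| := by
        rw [binomExpect_mul_eval_logTaylor hn₀ hp.ne']
        exact (abs_sub_le _ _ _).trans_eq (by congr 2; ring)
    _ ≤ _ := add_le_add htaylor (abs_sum_div_pow_le hn₁ _ _ 4)

lemma sum_piAntidiag_cons_multinomial_mul {ι : Type*} [DecidableEq ι] {j : ι} {t : Finset ι}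
    (hj : j ∉ t) (n : ℕ) (w : ι → ℝ) (h : ℕ → ℝ) :
    ∑ f ∈ (cons j t hj).piAntidiag n,
        (Nat.multinomial (cons j t hj) f : ℝ) * (∏ i ∈ cons j t hj, w i ^ f i) * h (f j)
      = ∑ k ∈ range (n + 1), (n.choose k : ℝ) * w j ^ k * (∑ i ∈ t, w i) ^ (n - k) * h k := by
  rw [piAntidiag_cons, sum_disjiUnion, ← Nat.sum_antidiagonal_eq_sum_range_succ
    (fun a b => (n.choose a : ℝ) * w j ^ a * (∑ i ∈ t, w i) ^ b * h a)]
  refine sum_congr rfl fun ⟨a, b⟩ hab => ?_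
  rw [HasAntidiagonal.mem_antidiagonal] at hab
  dsimp only at hab ⊢
  rw [sum_map, sum_pow_eq_sum_piAntidiag, mul_sum, sum_mul]
  refine sum_congr rfl fun g hg => ?_
  obtain ⟨hg_sum, hg_supp⟩ := mem_piAntidiag.mp hg
  have hgj : g j = 0 := by_contra fun hne => hj (hg_supp j hne)
  set f := (addRightEmbedding fun i => if i = j then a else 0) g
  have hfj : f j = a := by simp [f, hgj]
  have hft : ∀ i ∈ t, f i = g i := fun i hi => by simp [f, ne_of_mem_of_not_mem hi hj]
  rw [Nat.multinomial_cons, prod_cons, hfj, sum_congr rfl hft, hg_sum, hab,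
    Nat.multinomial_congr hft, prod_congr rfl fun i hi => by rw [hft i hi]]
  push_cast
  ring

lemma sum_multProb_mul_apply {M : ℕ} (n : ℕ) {p : Fin M → ℝ} (hsum : ∑ j, p j = 1) (j : Fin M)
    (h : ℕ → ℝ) :
    ∑ f ∈ Finset.Nat.antidiagonalTuple M n, multProb p f * h (f j) = binomExpect n (p j) h := by
  have huniv : (univ : Finset (Fin M)) = cons j (univ.erase j) (notMem_erase j univ) := by
    rw [cons_eq_insert, insert_erase (mem_univ j)]
  have herase : ∑ i ∈ univ.erase j, p i = 1 - p j := by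
    rw [← hsum, sum_erase_eq_sub (mem_univ j)]
  simp only [multProb]
  rw [← piAntidiag_univ_fin_eq_antidiagonalTuple, huniv, sum_piAntidiag_cons_multinomial_mul,
    herase, binomExpect]

lemma expEntropy_eq_neg_sum_binomExpect {M : ℕ} (n : ℕ) {p : Fin M → ℝ} (hsum : ∑ j, p j = 1) :
    expEntropy M n p = -∑ j, binomExpect n (p j) (fun k => (k : ℝ) / n * log ((k : ℝ) / n)) := by
  simp only [expEntropy, plugInEntropy, mul_neg, mul_sum, sum_neg_distrib]
  rw [sum_comm]
  exact congrArg _ (sum_congr rfl fun j _ =>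
    sum_multProb_mul_apply n hsum j fun k => (k : ℝ) / n * log ((k : ℝ) / n))

/-- Bias expansion of the plug-in entropy estimator up to order `n⁻³`
with `O(n⁻⁴)` remainder. -/
theorem expEntropy_expansion (M : ℕ) (p : Fin M → ℝ)
    (hp : ∀ j, 0 < p j) (hsum : ∑ j, p j = 1) :
    ∃ C : ℝ, ∀ n : ℕ, 1 ≤ n →
      |expEntropy M n p -
          (shannonH p - ((M : ℝ) - 1) / (2 * (n : ℝ)) +
            (1 / (12 * (n : ℝ) ^ 2)) * (1 - ∑ j, 1 / p j) +
            (1 / (12 * (n : ℝ) ^ 3)) * ∑ j, (1 / p j - 1 / (p j) ^ 2))| ≤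
        C / (n : ℝ) ^ 4 := by
  have hp₁ : ∀ j, p j ≤ 1 := fun j =>
    hsum ▸ single_le_sum (fun i _ => (hp i).le) (mem_univ j)
  choose C hC using fun j => exists_abs_binomExpect_mul_log_sub_le (hp j) (hp₁ j)
  refine ⟨∑ j, C j, fun n hn => ?_⟩
  have hexpansion : shannonH p - ((M : ℝ) - 1) / (2 * n) + 1 / (12 * n ^ 2) * (1 - ∑ j, 1 / p j)
        + 1 / (12 * n ^ 3) * ∑ j, (1 / p j - 1 / p j ^ 2)
      = -∑ j, (p j * log (p j) + (1 - p j) / (2 * n) - (p j - 1 / p j) / (12 * n ^ 2)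
          - (1 / p j - 1 / p j ^ 2) / (12 * n ^ 3)) := by
    simp only [shannonH, sum_add_distrib, sum_sub_distrib, ← sum_div, hsum, sum_const, card_univ,
      Fintype.card_fin, nsmul_eq_mul, mul_one]
    ring
  rw [expEntropy_eq_neg_sum_binomExpect n hsum, hexpansion, neg_sub_neg, abs_sub_comm,
    ← sum_sub_distrib, sum_div]
  exact (abs_sum_le_sum_abs _ _).trans (sum_le_sum fun j _ => hC j n hn)
end

section
/- The leading term of the variance of the plug-in entropy estimator satisfies n · Var(\hat{H}) → Σ_j p_j ln^2 p_j - H^2 as n → ∞; in particular, if all p_j are equal (p_j = 1/M), this limit is zero. -/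
/-!
Realise the multinomial counts as the letter counts of `n` i.i.d. draws `ω` from `p`, and let `q`
be the empirical distribution. Then `Ĥ = H + L - KL(q ‖ p)`, where
`L = (1/n) ∑ᵢ (-log p(ωᵢ) - H)` is an average of i.i.d. centred variables, so that
`n Var L = ∑ p ln² p - H²`. The remainder satisfies `0 ≤ KL(q ‖ p) ≤ χ²(q, p)`, and the fourth
moment of a centred i.i.d. sum is `O(n²)`, so `E[KL²] = O(n⁻²)`. Finally `Var(L - KL)` differs
from `Var L` by at most `2 √(Var L · E[KL²]) + E[KL²] = O(n^(-3/2))`.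
-/

open Finset Real InformationTheory

section IIDExpectation

variable {α : Type*} [Fintype α] (p : α → ℝ)

noncomputable def iidExp (n : ℕ) (g : (Fin n → α) → ℝ) : ℝ :=
  ∑ ω, (∏ i, p (ω i)) * g ω

lemma iidExp_succ (n : ℕ) (g : (Fin (n + 1) → α) → ℝ) :
    iidExp p (n + 1) g = ∑ a, p a * iidExp p n (fun ω => g (Fin.cons a ω)) := by
  rw [iidExp, ← (Fin.consEquiv fun _ => α).sum_comp, Fintype.sum_prod_type]
  simp only [iidExp, mul_sum, Fin.prod_univ_succ, mul_assoc]
  rfl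

variable {p}

lemma iidExp_add {n : ℕ} (f g : (Fin n → α) → ℝ) :
    iidExp p n (fun ω => f ω + g ω) = iidExp p n f + iidExp p n g := by
  simp only [iidExp, mul_add, sum_add_distrib]

lemma iidExp_const_mul {n : ℕ} (c : ℝ) (f : (Fin n → α) → ℝ) :
    iidExp p n (fun ω => c * f ω) = c * iidExp p n f := by
  simp only [iidExp, mul_sum, mul_left_comm]

lemma iidExp_div_const {n : ℕ} (f : (Fin n → α) → ℝ) (c : ℝ) :
    iidExp p n (fun ω => f ω / c) = iidExp p n f / c := by
  simp only [div_eq_inv_mul, iidExp_const_mul]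

lemma iidExp_sum {n : ℕ} {κ : Type*} (s : Finset κ) (f : κ → (Fin n → α) → ℝ) :
    iidExp p n (fun ω => ∑ k ∈ s, f k ω) = ∑ k ∈ s, iidExp p n (f k) := by
  simp only [iidExp, mul_sum]
  exact sum_comm

lemma iidExp_const (hsum : ∑ a, p a = 1) (n : ℕ) (c : ℝ) : iidExp p n (fun _ => c) = c := by
  induction n with
  | zero => simp [iidExp]
  | succ n ih => rw [iidExp_succ]; simp only [ih, ← sum_mul, hsum, one_mul]

variable (hp : ∀ a, 0 ≤ p a)
include hp

lemma iidExp_mono {n : ℕ} {f g : (Fin n → α) → ℝ} (hfg : ∀ ω, f ω ≤ g ω) :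
    iidExp p n f ≤ iidExp p n g :=
  sum_le_sum fun ω _ => mul_le_mul_of_nonneg_left (hfg ω) (prod_nonneg fun i _ => hp (ω i))

lemma iidExp_mul_sq_le {n : ℕ} (f g : (Fin n → α) → ℝ) :
    iidExp p n (fun ω => f ω * g ω) ^ 2
      ≤ iidExp p n (fun ω => f ω ^ 2) * iidExp p n (fun ω => g ω ^ 2) := by
  have hw (ω : Fin n → α) : 0 ≤ ∏ i, p (ω i) := prod_nonneg fun i _ => hp (ω i)
  exact sum_sq_le_sum_mul_sum_of_sq_le_mul _ (fun ω _ => mul_nonneg (hw ω) (sq_nonneg _))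
    (fun ω _ => mul_nonneg (hw ω) (sq_nonneg _)) fun ω _ => le_of_eq (by ring)

end IIDExpectation

section IIDVariance

variable {α : Type*} [Fintype α] {p : α → ℝ} {n : ℕ}

noncomputable def iidVar (p : α → ℝ) (n : ℕ) (X : (Fin n → α) → ℝ) : ℝ :=
  iidExp p n (fun ω => X ω ^ 2) - iidExp p n X ^ 2

lemma iidVar_const_add (hsum : ∑ a, p a = 1) (c : ℝ) (X : (Fin n → α) → ℝ) :
    iidVar p n (fun ω => c + X ω) = iidVar p n X := by
  simp only [iidVar, add_sq, iidExp_add, iidExp_const hsum, mul_assoc, iidExp_const_mul]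
  ring

lemma abs_iidVar_add_sub_le (hp : ∀ a, 0 ≤ p a) (hsum : ∑ a, p a = 1)
    {X : (Fin n → α) → ℝ} (hX : iidExp p n X = 0) (Y : (Fin n → α) → ℝ) :
    |iidVar p n (fun ω => X ω + Y ω) - iidExp p n (fun ω => X ω ^ 2)|
      ≤ 2 * √(iidExp p n (fun ω => X ω ^ 2) * iidExp p n (fun ω => Y ω ^ 2))
        + iidExp p n (fun ω => Y ω ^ 2) := by
  have hcov : |iidExp p n (fun ω => X ω * Y ω)|
      ≤ √(iidExp p n (fun ω => X ω ^ 2) * iidExp p n (fun ω => Y ω ^ 2)) :=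
    abs_le_sqrt (iidExp_mul_sq_le hp X Y)
  have hmean : iidExp p n Y ^ 2 ≤ iidExp p n (fun ω => Y ω ^ 2) := by
    simpa [iidExp_const hsum] using iidExp_mul_sq_le hp (fun _ => 1) Y
  have hsplit : iidVar p n (fun ω => X ω + Y ω) - iidExp p n (fun ω => X ω ^ 2)
      = 2 * iidExp p n (fun ω => X ω * Y ω)
        + (iidExp p n (fun ω => Y ω ^ 2) - iidExp p n Y ^ 2) := by
    simp only [iidVar, add_sq, iidExp_add, mul_assoc, iidExp_const_mul, hX]
    ring
  rw [hsplit]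
  refine (abs_add_le _ _).trans ?_
  rw [abs_mul, abs_two, abs_of_nonneg (sub_nonneg.2 hmean)]
  nlinarith [sq_nonneg (iidExp p n Y)]

end IIDVariance

section Counting

variable {α : Type*} [Fintype α] [DecidableEq α] {n : ℕ}

def counts (ω : Fin n → α) (a : α) : ℕ := #{i | ω i = a}

@[to_additive]
lemma prod_comp_eq_prod_pow_counts {β : Type*} [CommMonoid β] (h : α → β) (ω : Fin n → α) :
    ∏ i, h (ω i) = ∏ a, h a ^ counts ω a := by
  simp [← prod_fiberwise' univ ω h, counts]

lemma sum_counts (ω : Fin n → α) : ∑ a, counts ω a = n := by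
  simpa using (sum_comp_eq_sum_nsmul_counts (fun _ => (1 : ℕ)) ω).symm

-- Compare the coefficients of `X^f` in the two expansions of `(∑ a, X a) ^ n`.
open MvPolynomial in
lemma card_counts_eq (f : α → ℕ) (hf : ∑ a, f a = n) :
    #{ω : Fin n → α | counts ω = f} = Nat.multinomial univ f := by
  have hX (k : α → ℕ) :
      ∏ a, (X a : MvPolynomial α ℕ) ^ k a = monomial (Finsupp.equivFunOnFinite.symm k) 1 := by
    rw [monomial_eq, C_1, one_mul, Finsupp.prod_fintype _ _ (by simp)]
    rfl
  have hpow : (∑ a, X a : MvPolynomial α ℕ) ^ n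
      = ∑ ω : Fin n → α, monomial (Finsupp.equivFunOnFinite.symm (counts ω)) 1 := by
    rw [← Fin.prod_const, Fintype.prod_sum]
    simp only [prod_comp_eq_prod_pow_counts, hX]
  have := congrArg (coeff (Finsupp.equivFunOnFinite.symm f)) hpow
  rw [coeff_sum_X_pow_of_fintype, coeff_sum] at this
  simp only [coeff_monomial, EmbeddingLike.apply_eq_iff_eq, sum_boole, Nat.cast_id,
    Finsupp.multinomial_eq_of_support_subset (subset_univ _)] at this
  rw [Finsupp.sum_fintype _ _ (fun _ => rfl), Finsupp.coe_equivFunOnFinite_symm, hf,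
    if_pos rfl] at this
  exact this.symm

end Counting

theorem sum_antidiagonalTuple_multProb_mul {M n : ℕ} (p : Fin M → ℝ) (g : (Fin M → ℕ) → ℝ) :
    ∑ f ∈ Nat.antidiagonalTuple M n, multProb p f * g f = iidExp p n (fun ω => g (counts ω)) := by
  rw [iidExp, ← sum_fiberwise_of_maps_to (g := counts) (t := Nat.antidiagonalTuple M n)
    fun ω _ => Nat.mem_antidiagonalTuple.2 (sum_counts ω)]
  refine sum_congr rfl fun f hf => ?_
  rw [sum_congr rfl fun ω hω => by rw [prod_comp_eq_prod_pow_counts, (mem_filter.1 hω).2],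
    sum_const, card_counts_eq f (Nat.mem_antidiagonalTuple.1 hf), multProb, nsmul_eq_mul]
  ring

section CenteredSums

variable {α : Type*} [Fintype α] {p : α → ℝ} (h : α → ℝ)

lemma iidExp_succ_sum_comp (n : ℕ) (F : ℝ → ℝ) :
    iidExp p (n + 1) (fun ω => F (∑ i, h (ω i)))
      = ∑ a, p a * iidExp p n (fun ω => F (h a + ∑ i, h (ω i))) := by
  simp only [iidExp_succ, Fin.sum_univ_succ, Fin.cons_zero, Fin.cons_succ]

variable {h} (hsum : ∑ a, p a = 1) (hh : ∑ a, p a * h a = 0)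
include hsum hh

lemma iidExp_sum_comp_eq_zero (n : ℕ) : iidExp p n (fun ω => ∑ i, h (ω i)) = 0 := by
  induction n with
  | zero => simp [iidExp]
  | succ n ih =>
    rw [iidExp_succ_sum_comp h n (F := fun x => x)]
    simp only [iidExp_add, iidExp_const hsum, ih, add_zero, hh]

lemma iidExp_sum_comp_sq (n : ℕ) :
    iidExp p n (fun ω => (∑ i, h (ω i)) ^ 2) = n * ∑ a, p a * h a ^ 2 := by
  induction n with
  | zero => simp [iidExp]
  | succ n ih =>
    rw [iidExp_succ_sum_comp h n (· ^ 2)]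
    have (a : α) : iidExp p n (fun ω => (h a + ∑ i, h (ω i)) ^ 2)
        = h a ^ 2 + n * ∑ a, p a * h a ^ 2 := by
      simp only [add_sq, iidExp_add, iidExp_const hsum, mul_assoc, iidExp_const_mul,
        iidExp_sum_comp_eq_zero hsum hh, ih]
      ring
    simp only [this, mul_add, sum_add_distrib, ← sum_mul, hsum]
    push_cast
    ring

lemma iidExp_sum_comp_pow_four (n : ℕ) :
    iidExp p n (fun ω => (∑ i, h (ω i)) ^ 4)
      = n * ∑ a, p a * h a ^ 4 + 3 * n * (n - 1) * (∑ a, p a * h a ^ 2) ^ 2 := by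
  induction n with
  | zero => simp [iidExp]
  | succ n ih =>
    rw [iidExp_succ_sum_comp h n (· ^ 4)]
    have (a : α) : iidExp p n (fun ω => (h a + ∑ i, h (ω i)) ^ 4)
        = h a ^ 4 + h a * (4 * iidExp p n (fun ω => (∑ i, h (ω i)) ^ 3))
          + h a ^ 2 * (6 * n * ∑ a, p a * h a ^ 2) + iidExp p n (fun ω => (∑ i, h (ω i)) ^ 4) := by
      have e (x : ℝ) : (h a + x) ^ 4
          = h a ^ 4 + 4 * h a ^ 3 * x + (6 * h a ^ 2 * x ^ 2 + (4 * h a * x ^ 3 + x ^ 4)) := by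
        ring
      simp only [e, iidExp_add, iidExp_const hsum, iidExp_const_mul,
        iidExp_sum_comp_eq_zero hsum hh, iidExp_sum_comp_sq hsum hh]
      ring
    simp only [this, ih, mul_add, sum_add_distrib, ← mul_assoc, ← sum_mul, hh, hsum]
    push_cast
    ring

lemma iidExp_sum_comp_pow_four_le (hp : ∀ a, 0 ≤ p a) (hbdd : ∀ a, |h a| ≤ 1) (n : ℕ) :
    iidExp p n (fun ω => (∑ i, h (ω i)) ^ 4) ≤ 3 * n ^ 2 := by
  have hsq (a : α) : h a ^ 2 ≤ 1 := sq_le_one_iff_abs_le_one _ |>.2 (hbdd a)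
  have hA2 : ∑ a, p a * h a ^ 2 ≤ 1 :=
    hsum ▸ sum_le_sum fun a _ => mul_le_of_le_one_right (hp a) (hsq a)
  have hA4 : ∑ a, p a * h a ^ 4 ≤ 1 := hsum ▸ sum_le_sum fun a _ =>
    mul_le_of_le_one_right (hp a) (by nlinarith [hsq a, sq_nonneg (h a)])
  have hA2' : 0 ≤ ∑ a, p a * h a ^ 2 := sum_nonneg fun a _ => mul_nonneg (hp a) (sq_nonneg _)
  rw [iidExp_sum_comp_pow_four hsum hh]
  rcases Nat.eq_zero_or_pos n with rfl | hn
  · simp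
  have hn : (1 : ℝ) ≤ n := by exact_mod_cast hn
  nlinarith [mul_le_mul_of_nonneg_left hA4 (by positivity : (0 : ℝ) ≤ n),
    mul_le_mul_of_nonneg_left (pow_le_one₀ hA2' hA2 : (∑ a, p a * h a ^ 2) ^ 2 ≤ 1)
      (by nlinarith : (0 : ℝ) ≤ 3 * n * (n - 1))]

end CenteredSums

lemma klFun_le_sq {x : ℝ} (hx : 0 ≤ x) : klFun x ≤ (x - 1) ^ 2 := by
  rcases hx.eq_or_lt with rfl | hx
  · simp [klFun_zero]
  · have := mul_le_mul_of_nonneg_left (log_le_sub_one_of_pos hx) hx.le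
    rw [klFun_apply]
    nlinarith

-- Entropy is cross-entropy minus KL divergence.
lemma neg_sum_mul_log_eq_sub_sum_mul_klFun {ι : Type*} [Fintype ι] {p q : ι → ℝ}
    (hp : ∀ i, p i ≠ 0) (hq : ∑ i, q i = ∑ i, p i) :
    -∑ i, q i * log (q i) = -∑ i, q i * log (p i) - ∑ i, p i * klFun (q i / p i) := by
  have (i : ι) : p i * klFun (q i / p i) = q i * log (q i) - q i * log (p i) + p i - q i := by
    rw [klFun_apply, mul_sub, mul_add, ← mul_assoc, mul_div_cancel₀ _ (hp i)]
    rcases eq_or_ne (q i) 0 with hqi | hqi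
    · simp [hqi]
    · rw [log_div hqi (hp i)]
      ring
  simp only [this, sum_add_distrib, sum_sub_distrib, hq]
  ring

section PlugInEntropy

variable {M : ℕ} {p : Fin M → ℝ}

noncomputable def centeredSurprisal (p : Fin M → ℝ) (j : Fin M) : ℝ := -log (p j) - shannonH p

lemma sum_mul_centeredSurprisal (hsum : ∑ j, p j = 1) :
    ∑ j, p j * centeredSurprisal p j = 0 := by
  simp only [centeredSurprisal, shannonH, mul_sub, sum_sub_distrib, ← sum_mul, hsum]
  simp [mul_neg]

lemma sum_mul_centeredSurprisal_sq (hsum : ∑ j, p j = 1) :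
    ∑ j, p j * centeredSurprisal p j ^ 2 = ∑ j, p j * log (p j) ^ 2 - shannonH p ^ 2 := by
  have (j : Fin M) : p j * centeredSurprisal p j ^ 2
      = p j * log (p j) ^ 2 + 2 * shannonH p * (p j * log (p j)) + shannonH p ^ 2 * p j := by
    rw [centeredSurprisal]; ring
  simp only [this, sum_add_distrib, ← mul_sum, hsum]
  rw [shannonH]
  ring

lemma sum_mul_log_sq_sub_shannonH_sq_eq_zero_of_forall_eq (hsum : ∑ j, p j = 1) {c : ℝ}
    (hc : ∀ j, p j = c) : ∑ j, p j * log (p j) ^ 2 - shannonH p ^ 2 = 0 := by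
  simp only [shannonH, hc, sum_const, card_univ, Fintype.card_fin, nsmul_eq_mul] at hsum ⊢
  linear_combination (-(M * c) * log c ^ 2) * hsum

noncomputable def meanCenteredSurprisal (p : Fin M → ℝ) {n : ℕ} (ω : Fin n → Fin M) : ℝ :=
  (∑ i, centeredSurprisal p (ω i)) / n

lemma iidExp_meanCenteredSurprisal (hsum : ∑ j, p j = 1) (n : ℕ) :
    iidExp p n (meanCenteredSurprisal p) = 0 := by
  change iidExp p n (fun ω => (∑ i, centeredSurprisal p (ω i)) / n) = 0
  rw [iidExp_div_const, iidExp_sum_comp_eq_zero hsum (sum_mul_centeredSurprisal hsum), zero_div]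

lemma natCast_mul_iidExp_meanCenteredSurprisal_sq (hsum : ∑ j, p j = 1) {n : ℕ} (hn : n ≠ 0) :
    n * iidExp p n (fun ω => meanCenteredSurprisal p ω ^ 2)
      = ∑ j, p j * log (p j) ^ 2 - shannonH p ^ 2 := by
  have hn' : (n : ℝ) ≠ 0 := Nat.cast_ne_zero.2 hn
  simp only [meanCenteredSurprisal, div_pow, iidExp_div_const,
    iidExp_sum_comp_sq hsum (sum_mul_centeredSurprisal hsum), sum_mul_centeredSurprisal_sq hsum]
  field_simp

noncomputable def empirical {n : ℕ} (ω : Fin n → Fin M) (j : Fin M) : ℝ := counts ω j / n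

noncomputable def empiricalKL (p : Fin M → ℝ) {n : ℕ} (ω : Fin n → Fin M) : ℝ :=
  ∑ j, p j * klFun (empirical ω j / p j)

lemma plugInEntropy_counts_eq (hp : ∀ j, 0 < p j) (hsum : ∑ j, p j = 1) {n : ℕ} (hn : n ≠ 0)
    (ω : Fin n → Fin M) :
    plugInEntropy n (counts ω)
      = shannonH p + meanCenteredSurprisal p ω - empiricalKL p ω := by
  have hq : ∑ j, empirical ω j = ∑ j, p j := by
    simp only [empirical, ← sum_div, ← Nat.cast_sum, sum_counts, hsum]
    exact div_self (Nat.cast_ne_zero.2 hn)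
  have hcross : -∑ j, empirical ω j * log (p j) = shannonH p + meanCenteredSurprisal p ω := by
    have hn' : (n : ℝ) ≠ 0 := Nat.cast_ne_zero.2 hn
    simp only [empirical, meanCenteredSurprisal, centeredSurprisal, div_mul_eq_mul_div,
      ← sum_div, sum_sub_distrib, sum_neg_distrib, sum_const, card_univ, Fintype.card_fin,
      ← nsmul_eq_mul, ← sum_comp_eq_sum_nsmul_counts (fun j => log (p j)) ω]
    field_simp
    ring
  rw [plugInEntropy, ← hcross, empiricalKL]
  exact neg_sum_mul_log_eq_sub_sum_mul_klFun (fun j => (hp j).ne') hq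

lemma empiricalKL_nonneg (hp : ∀ j, 0 ≤ p j) {n : ℕ} (ω : Fin n → Fin M) :
    0 ≤ empiricalKL p ω :=
  sum_nonneg fun j _ => mul_nonneg (hp j) <| klFun_nonneg <| by
    unfold empirical; have := hp j; positivity

lemma empiricalKL_le (hp : ∀ j, 0 < p j) {n : ℕ} (ω : Fin n → Fin M) :
    empiricalKL p ω ≤ ∑ j, (empirical ω j - p j) ^ 2 / p j := by
  refine sum_le_sum fun j _ => ?_
  have hpj := hp j
  calc p j * klFun (empirical ω j / p j) ≤ p j * (empirical ω j / p j - 1) ^ 2 := by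
        gcongr
        exact klFun_le_sq (by unfold empirical; positivity)
    _ = (empirical ω j - p j) ^ 2 / p j := by field_simp

lemma empiricalKL_sq_le (hp : ∀ j, 0 < p j) {n : ℕ} (ω : Fin n → Fin M) :
    empiricalKL p ω ^ 2 ≤ M * ∑ j, (empirical ω j - p j) ^ 4 / p j ^ 2 := by
  calc empiricalKL p ω ^ 2 ≤ (∑ j, (empirical ω j - p j) ^ 2 / p j) ^ 2 :=
        pow_le_pow_left₀ (empiricalKL_nonneg (fun j => (hp j).le) ω) (empiricalKL_le hp ω) 2
    _ ≤ M * ∑ j, ((empirical ω j - p j) ^ 2 / p j) ^ 2 := by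
        simpa using sq_sum_le_card_mul_sum_sq (s := univ)
          (f := fun j => (empirical ω j - p j) ^ 2 / p j)
    _ = M * ∑ j, (empirical ω j - p j) ^ 4 / p j ^ 2 := by
        congr 1; refine sum_congr rfl fun j _ => ?_; ring

lemma iidExp_empirical_sub_pow_four_le (hp : ∀ j, 0 ≤ p j) (hsum : ∑ j, p j = 1) {n : ℕ}
    (hn : n ≠ 0) (j : Fin M) :
    iidExp p n (fun ω => (empirical ω j - p j) ^ 4) ≤ 3 / n ^ 2 := by
  set h : Fin M → ℝ := fun a => (if a = j then 1 else 0) - p j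
  have hcentered : ∑ a, p a * h a = 0 := by simp [h, mul_sub, ← sum_mul, hsum]
  have hpj : p j ≤ 1 := hsum ▸ single_le_sum (fun a _ => hp a) (mem_univ j)
  have hbdd (a : Fin M) : |h a| ≤ 1 := by
    simp only [h]; split_ifs <;> rw [abs_le] <;> constructor <;> linarith [hp j]
  have hn' : (n : ℝ) ≠ 0 := Nat.cast_ne_zero.2 hn
  have hsub (ω : Fin n → Fin M) : (empirical ω j - p j) ^ 4 = (∑ i, h (ω i)) ^ 4 / n ^ 4 := by
    simp only [h, empirical, counts, card_filter, sum_sub_distrib, sum_const, card_univ,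
      Fintype.card_fin, nsmul_eq_mul]
    push_cast
    field_simp
  simp only [hsub, iidExp_div_const]
  calc iidExp p n (fun ω => (∑ i, h (ω i)) ^ 4) / (n : ℝ) ^ 4 ≤ 3 * n ^ 2 / (n : ℝ) ^ 4 := by
        gcongr; exact iidExp_sum_comp_pow_four_le hsum hcentered hp hbdd n
    _ = 3 / (n : ℝ) ^ 2 := by field_simp

lemma iidExp_empiricalKL_sq_le (hp : ∀ j, 0 < p j) (hsum : ∑ j, p j = 1) {n : ℕ} (hn : n ≠ 0) :
    iidExp p n (fun ω => empiricalKL p ω ^ 2) ≤ 3 * M * (∑ j, 1 / p j ^ 2) / n ^ 2 := by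
  calc iidExp p n (fun ω => empiricalKL p ω ^ 2)
      ≤ iidExp p n (fun ω => M * ∑ j, (empirical ω j - p j) ^ 4 / p j ^ 2) :=
        iidExp_mono (fun j => (hp j).le) (empiricalKL_sq_le hp)
    _ = M * ∑ j, iidExp p n (fun ω => (empirical ω j - p j) ^ 4) / p j ^ 2 := by
        rw [iidExp_const_mul, iidExp_sum]
        simp only [iidExp_div_const]
    _ ≤ M * ∑ j, 3 / n ^ 2 / p j ^ 2 := by
        gcongr with j
        exact iidExp_empirical_sub_pow_four_le (fun j => (hp j).le) hsum hn j
    _ = 3 * M * (∑ j, 1 / p j ^ 2) / n ^ 2 := by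
        rw [mul_sum, mul_sum, sum_div]
        refine sum_congr rfl fun j _ => ?_
        ring

lemma varEntropy_eq_iidVar (M n : ℕ) (p : Fin M → ℝ) :
    varEntropy M n p = iidVar p n (fun ω => plugInEntropy n (counts ω)) := by
  rw [varEntropy, expEntropy, sum_antidiagonalTuple_multProb_mul,
    sum_antidiagonalTuple_multProb_mul]
  rfl

lemma abs_natCast_mul_varEntropy_sub_le (hp : ∀ j, 0 < p j) (hsum : ∑ j, p j = 1) {n : ℕ}
    (hn : n ≠ 0) :
    |n * varEntropy M n p - (∑ j, p j * log (p j) ^ 2 - shannonH p ^ 2)|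
      ≤ 2 * √((∑ j, p j * log (p j) ^ 2 - shannonH p ^ 2) * (3 * M * (∑ j, 1 / p j ^ 2) / n))
        + 3 * M * (∑ j, 1 / p j ^ 2) / n := by
  have hσ2 : 0 ≤ ∑ j, p j * log (p j) ^ 2 - shannonH p ^ 2 :=
    sum_mul_centeredSurprisal_sq hsum ▸ sum_nonneg fun j _ => mul_nonneg (hp j).le (sq_nonneg _)
  have hL2 := natCast_mul_iidExp_meanCenteredSurprisal_sq hsum hn
  set σ2 := ∑ j, p j * log (p j) ^ 2 - shannonH p ^ 2
  set C : ℝ := 3 * M * ∑ j, 1 / p j ^ 2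
  set vL := iidExp p n (fun ω => meanCenteredSurprisal p ω ^ 2)
  set vK := iidExp p n (fun ω => (-empiricalKL p ω) ^ 2)
  have hK2 : n * vK ≤ C / n := by
    simp only [vK, neg_sq]
    rw [← le_div_iff₀' (by positivity), div_div, ← sq]
    exact iidExp_empiricalKL_sq_le hp hsum hn
  have hdecomp : (fun ω => plugInEntropy n (counts ω))
      = fun ω => shannonH p + (meanCenteredSurprisal p ω + -empiricalKL p ω) :=
    funext fun ω => by rw [plugInEntropy_counts_eq hp hsum hn]; ring
  have hsqrt (a b : ℝ) : √((n * a) * (n * b)) = n * √(a * b) := by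
    rw [show n * a * (n * b) = (n : ℝ) ^ 2 * (a * b) by ring, sqrt_mul (sq_nonneg _),
      sqrt_sq (Nat.cast_nonneg _)]
  rw [varEntropy_eq_iidVar, hdecomp, iidVar_const_add hsum]
  calc |n * iidVar p n (fun ω => meanCenteredSurprisal p ω + -empiricalKL p ω) - σ2|
      = n * |iidVar p n (fun ω => meanCenteredSurprisal p ω + -empiricalKL p ω) - vL| := by
        rw [← hL2, ← mul_sub, abs_mul, Nat.abs_cast]
    _ ≤ n * (2 * √(vL * vK) + vK) := by
        gcongr
        exact abs_iidVar_add_sub_le (fun j => (hp j).le) hsum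
          (iidExp_meanCenteredSurprisal hsum n) _
    _ = 2 * √((n * vL) * (n * vK)) + n * vK := by rw [hsqrt]; ring
    _ ≤ 2 * √(σ2 * (C / n)) + C / n := by rw [hL2]; gcongr

end PlugInEntropy

/-- Leading term of the variance of the plug-in entropy estimator:
`n · Var(Ĥ) → ∑ⱼ pⱼ ln² pⱼ - H²`; in the equiprobable case this limit is zero. -/
theorem varEntropy_leading (M : ℕ) (p : Fin M → ℝ)
    (hp : ∀ j, 0 < p j) (hsum : ∑ j, p j = 1) :
    Filter.Tendsto (fun n : ℕ => (n : ℝ) * varEntropy M n p) Filter.atTop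
      (nhds ((∑ j, p j * (Real.log (p j)) ^ 2) - (shannonH p) ^ 2)) ∧
    ((∀ j, p j = 1 / (M : ℝ)) →
      (∑ j, p j * (Real.log (p j)) ^ 2) - (shannonH p) ^ 2 = 0) := by
  refine ⟨?_, sum_mul_log_sq_sub_shannonH_sq_eq_zero_of_forall_eq hsum⟩
  set σ2 := ∑ j, p j * log (p j) ^ 2 - shannonH p ^ 2
  set C : ℝ := 3 * M * ∑ j, 1 / p j ^ 2
  have hbound :
      Filter.Tendsto (fun n : ℕ => 2 * √(σ2 * (C / n)) + C / n) Filter.atTop (nhds 0) := by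
    simpa using (((tendsto_const_div_atTop_nhds_zero_nat C).const_mul σ2).sqrt.const_mul 2).add
      (tendsto_const_div_atTop_nhds_zero_nat C)
  refine tendsto_sub_nhds_zero_iff.1 (squeeze_zero_norm' ?_ hbound)
  filter_upwards [Filter.eventually_ne_atTop 0] with n hn
  exact abs_natCast_mul_varEntropy_sub_le hp hsum hn
end
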